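/- arXiv:2308.13303 — 7 statements merged into one kernel-verified Lean document; each statement's English description precedes it below -/
import Mathlib

section
/- Let v be a vertex and x ∈ {1,…,k}, and set t = t_x + dist(s_x, v). If there exists y ∈ {1,…,k} with t_y > t_x and t_y + dist(s_y, v) ≤ t, then A(v,t) < 1 + dist(s_x, v); that is, the information held by v at time t is strictly fresher than the information seeded at s_x, so the candidate time t_x + dist(s_x,v) is not a discontinuity point attributable to seed s_x. -/
open Finset

def tsel (Δ j : ℕ) : ℕ := (j - 1) * Δ + 1

noncomputable def AoI {V : Type*} (G : SimpleGraph V) (s : ℕ → V) (Δ k A0 : ℕ) (v : V) :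
    ℕ → ℕ
  | 0 => A0
  | t + 1 =>
    let prev := AoI G s Δ k A0 v t
    let Ω : Finset ℕ := (Finset.Icc 1 k).filter
      (fun j => t + 1 = tsel Δ j + G.dist (s j) v ∧ G.dist (s j) v + 1 ≤ prev)
    if h : Ω.Nonempty then Ω.inf' h (fun j => 1 + G.dist (s j) v) else prev + 1

noncomputable def AoIR {V : Type*} (G : SimpleGraph V) (s : ℕ → V) (Δ k A0 : ℕ) (v : V)
    (t : ℝ) : ℝ :=
  (AoI G s Δ k A0 v ⌊t⌋₊ : ℝ) + (t - ⌊t⌋₊)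

open scoped Classical in
noncomputable def Dset {V : Type*} (G : SimpleGraph V) (s : ℕ → V) (Δ k : ℕ) (v : V) :
    Finset ℕ :=
  (Finset.Icc 1 k).filter (fun x => ∀ y ∈ Finset.Icc 1 k, x < y →
    tsel Δ x + G.dist (s x) v < tsel Δ y + G.dist (s y) v)

/-!
Age grows by at most one per time step, and at the arrival time `t_y + dist(s_y, v)` of seed `y`
the age at `v` is at most `1 + dist(s_y, v)`. Hence at `t = t_x + dist(s_x, v)` the age is at most
`1 + t - t_y = 1 + dist(s_x, v) - (t_y - t_x) < 1 + dist(s_x, v)`.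
-/

section AoI

variable {V : Type*} (G : SimpleGraph V) (s : ℕ → V) (Δ k A0 : ℕ) (v : V)

lemma AoI_succ_le (t : ℕ) : AoI G s Δ k A0 v (t + 1) ≤ AoI G s Δ k A0 v t + 1 := by
  rw [AoI]
  split
  · rename_i hΩ
    obtain ⟨i, hi⟩ := hΩ
    have hfresh := (mem_filter.mp hi).2.2
    exact (inf'_le _ hi).trans (by omega)
  · exact le_rfl

lemma AoI_add_le (t m : ℕ) : AoI G s Δ k A0 v (t + m) ≤ AoI G s Δ k A0 v t + m := by
  induction m with
  | zero => rfl
  | succ m ih =>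
    have := AoI_succ_le G s Δ k A0 v (t + m)
    rw [← Nat.add_assoc]
    omega

lemma AoI_arrival_le {j : ℕ} (hj : j ∈ Icc 1 k) :
    AoI G s Δ k A0 v (tsel Δ j + G.dist (s j) v) ≤ 1 + G.dist (s j) v := by
  set d := G.dist (s j) v
  obtain ⟨t, ht⟩ : ∃ t, tsel Δ j + d = t + 1 := ⟨(j - 1) * Δ + d, by simp only [tsel]; omega⟩
  rw [ht, AoI]
  by_cases hfresh : d + 1 ≤ AoI G s Δ k A0 v t
  · have hjΩ : j ∈ (Icc 1 k).filter
        (fun i => t + 1 = tsel Δ i + G.dist (s i) v ∧ G.dist (s i) v + 1 ≤ AoI G s Δ k A0 v t) :=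
      mem_filter.mpr ⟨hj, ht.symm, hfresh⟩
    rw [dif_pos ⟨j, hjΩ⟩]
    exact inf'_le _ hjΩ
  -- Seed `j` is stale, so `A(v, t) ≤ dist(s_j, v)`, and any update lies below `A(v, t)`.
  · split
    · rename_i hΩ
      obtain ⟨i, hi⟩ := hΩ
      have hi_fresh := (mem_filter.mp hi).2.2
      exact (inf'_le _ hi).trans (by omega)
    · omega

end AoI

theorem stmt1_general {V : Type*} (G : SimpleGraph V)
    (s : ℕ → V) (Δ k A0 : ℕ)
    (v : V) (x : ℕ)
    (y : ℕ) (hy : y ∈ Finset.Icc 1 k) (hty : tsel Δ x < tsel Δ y)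
    (hle : tsel Δ y + G.dist (s y) v ≤ tsel Δ x + G.dist (s x) v) :
    AoI G s Δ k A0 v (tsel Δ x + G.dist (s x) v) < 1 + G.dist (s x) v := by
  obtain ⟨m, hm⟩ := Nat.exists_eq_add_of_le hle
  have h_arrival := AoI_arrival_le G s Δ k A0 v hy
  have h_growth := AoI_add_le G s Δ k A0 v (tsel Δ y + G.dist (s y) v) m
  rw [← hm] at h_growth
  omega

theorem stmt1 {V : Type*} [Fintype V] (G : SimpleGraph V) (hconn : G.Connected)
    (s : ℕ → V) (Δ k A0 : ℕ) (hΔ : 1 ≤ Δ) (hk : 1 ≤ k) (hA0 : 1 ≤ A0)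
    (v : V) (x : ℕ) (hx : x ∈ Finset.Icc 1 k)
    (y : ℕ) (hy : y ∈ Finset.Icc 1 k) (hty : tsel Δ x < tsel Δ y)
    (hle : tsel Δ y + G.dist (s y) v ≤ tsel Δ x + G.dist (s x) v) :
    AoI G s Δ k A0 v (tsel Δ x + G.dist (s x) v) < 1 + G.dist (s x) v :=
  stmt1_general G s Δ k A0 v x y hy hty hle
end

section
/- For every vertex v and every x ∈ {1,…,k}, there exists a surviving index z ∈ D_v with z ≥ x and t_z + dist(s_z, v) ≤ t_x + dist(s_x, v). Consequently, τ₁(v) = min_{x ∈ {1,…,k}} ( t_x + dist(s_x, v) ), and for every x ∈ {1,…,k}, if j is the minimal index with i_j ≥ x then τ_j(v) ≤ t_x + dist(s_x, v), i.e. dist(s_x, v) ≥ dist(s_{i_j}, v) + (i_j − x)·Δ. -/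
open Finset

theorem stmt2 {V : Type*} [Fintype V] (G : SimpleGraph V) (hconn : G.Connected)
    (s : ℕ → V) (Δ k : ℕ) (hΔ : 1 ≤ Δ) (hk : 1 ≤ k)
    (v : V) (i : ℕ → ℕ) (kv : ℕ) (hkv : kv = (Dset G s Δ k v).card)
    (hi0 : i 0 = 1)
    (hmono : StrictMonoOn i (Set.Icc 1 kv))
    (him : Dset G s Δ k v = (Finset.Icc 1 kv).image i) :
    (∀ x ∈ Finset.Icc 1 k, ∃ z ∈ Dset G s Δ k v, x ≤ z ∧
        tsel Δ z + G.dist (s z) v ≤ tsel Δ x + G.dist (s x) v) ∧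
    IsLeast {m : ℕ | ∃ x ∈ Finset.Icc 1 k, m = tsel Δ x + G.dist (s x) v}
      (tsel Δ (i 1) + G.dist (s (i 1)) v) ∧
    (∀ x ∈ Finset.Icc 1 k, ∀ j ∈ Finset.Icc 1 kv, x ≤ i j →
      (∀ j' ∈ Finset.Icc 1 kv, x ≤ i j' → j ≤ j') →
      tsel Δ (i j) + G.dist (s (i j)) v ≤ tsel Δ x + G.dist (s x) v ∧
      G.dist (s (i j)) v + (i j - x) * Δ ≤ G.dist (s x) v) := by
  set f : ℕ → ℕ := fun j => tsel Δ j + G.dist (s j) v with hf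
  have hmem : ∀ a, a ∈ Dset G s Δ k v ↔
      a ∈ Finset.Icc 1 k ∧ ∀ y ∈ Finset.Icc 1 k, a < y → f a < f y := by
    intro a; simp only [Dset, Finset.mem_filter, hf]
  -- key existence lemma
  have key : ∀ x ∈ Finset.Icc 1 k, ∃ z ∈ Dset G s Δ k v, x ≤ z ∧ f z ≤ f x := by
    intro x hx
    have hxk := Finset.mem_Icc.mp hx
    set S := (Finset.Icc x k).filter (fun y => f y ≤ f x) with hS
    have hxS : x ∈ S := by simp [hS, hxk.2]
    have hSne : S.Nonempty := ⟨x, hxS⟩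
    set m := S.inf' hSne f with hm
    set T := S.filter (fun y => f y = m) with hT
    have hTne : T.Nonempty := by
      obtain ⟨y, hy, hfy⟩ := S.exists_mem_eq_inf' hSne f
      exact ⟨y, by simp [hT, hy, hfy.symm, hm]⟩
    set z := T.max' hTne with hz
    have hzT : z ∈ T := T.max'_mem hTne
    have hzS : z ∈ S := (Finset.mem_filter.mp hzT).1
    have hzm : f z = m := (Finset.mem_filter.mp hzT).2
    have hzIcc := Finset.mem_Icc.mp (Finset.mem_filter.mp hzS).1
    have hzfx : f z ≤ f x := (Finset.mem_filter.mp hzS).2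
    refine ⟨z, ?_, hzIcc.1, hzfx⟩
    rw [hmem]
    refine ⟨Finset.mem_Icc.mpr ⟨le_trans hxk.1 hzIcc.1, hzIcc.2⟩, ?_⟩
    intro y hy hzy
    by_contra hle
    push_neg at hle
    have hyk := Finset.mem_Icc.mp hy
    have hyS : y ∈ S := by
      refine Finset.mem_filter.mpr ⟨Finset.mem_Icc.mpr ⟨le_trans hzIcc.1 hzy.le, hyk.2⟩,
        le_trans hle hzfx⟩
    have hmy : m ≤ f y := Finset.inf'_le f hyS
    have hym : f y = m := le_antisymm (le_trans hle (le_of_eq hzm)) hmy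
    have hyT : y ∈ T := Finset.mem_filter.mpr ⟨hyS, hym⟩
    exact absurd (Finset.le_max' T y hyT) (not_le.mpr hzy)
  -- Dset ⊆ Icc 1 k and monotonicity of f on Dset
  have hDsub : ∀ a ∈ Dset G s Δ k v, a ∈ Finset.Icc 1 k := fun a ha =>
    ((hmem a).mp ha).1
  have hDmono : ∀ a ∈ Dset G s Δ k v, ∀ b ∈ Dset G s Δ k v, a ≤ b → f a ≤ f b := by
    intro a ha b hb hab
    rcases eq_or_lt_of_le hab with h | h
    · exact le_of_eq (by rw [h])
    · exact le_of_lt (((hmem a).mp ha).2 b (hDsub b hb) h)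
  have hkD : k ∈ Dset G s Δ k v := by
    rw [hmem]
    refine ⟨Finset.mem_Icc.mpr ⟨hk, le_refl k⟩, ?_⟩
    intro y hy hky
    exact absurd (Finset.mem_Icc.mp hy).2 (not_le.mpr hky)
  have hkv1 : 1 ≤ kv := by
    rw [hkv]
    exact Finset.card_pos.mpr ⟨k, hkD⟩
  have h1Icc : (1 : ℕ) ∈ Finset.Icc 1 kv := Finset.mem_Icc.mpr ⟨le_refl 1, hkv1⟩
  have hi1D : i 1 ∈ Dset G s Δ k v := by
    rw [him]; exact Finset.mem_image_of_mem i h1Icc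
  refine ⟨key, ?_, ?_⟩
  · constructor
    · exact ⟨i 1, hDsub _ hi1D, rfl⟩
    · rintro n ⟨x, hx, rfl⟩
      obtain ⟨z, hzD, hxz, hzfx⟩ := key x hx
      obtain ⟨j', hj', hij'⟩ := Finset.mem_image.mp (him ▸ hzD)
      have hj'Icc := Finset.mem_Icc.mp hj'
      have : i 1 ≤ i j' := by
        rcases eq_or_lt_of_le hj'Icc.1 with h | h
        · rw [← h]
        · exact le_of_lt (hmono ⟨le_refl 1, hkv1⟩ ⟨hj'Icc.1, hj'Icc.2⟩ h)
      have hiD : i j' ∈ Dset G s Δ k v := him ▸ Finset.mem_image_of_mem i hj'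
      calc f (i 1) ≤ f (i j') := hDmono _ hi1D _ hiD this
        _ = f z := by rw [hij']
        _ ≤ f x := hzfx
  · intro x hx j hj hxij hjmin
    obtain ⟨z, hzD, hxz, hzfx⟩ := key x hx
    obtain ⟨j', hj', hij'⟩ := Finset.mem_image.mp (him ▸ hzD)
    have hj'Icc := Finset.mem_Icc.mp hj'
    have hjIcc := Finset.mem_Icc.mp hj
    have hjj' : j ≤ j' := hjmin j' hj' (hij' ▸ hxz)
    have hijle : i j ≤ i j' := by
      rcases eq_or_lt_of_le hjj' with h | h
      · rw [h]
      · exact le_of_lt (hmono ⟨hjIcc.1, hjIcc.2⟩ ⟨hj'Icc.1, hj'Icc.2⟩ h)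
    have hijD : i j ∈ Dset G s Δ k v := him ▸ Finset.mem_image_of_mem i hj
    have hij'D : i j' ∈ Dset G s Δ k v := him ▸ Finset.mem_image_of_mem i hj'
    have hmain : f (i j) ≤ f x :=
      calc f (i j) ≤ f (i j') := hDmono _ hijD _ hij'D hijle
        _ = f z := by rw [hij']
        _ ≤ f x := hzfx
    refine ⟨hmain, ?_⟩
    have hx1 : 1 ≤ x := (Finset.mem_Icc.mp hx).1
    have hmul : (i j - 1) * Δ = (i j - x) * Δ + (x - 1) * Δ := by
      rw [← Nat.add_mul]; congr 1; omega
    simp only [hf, tsel] at hmain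
    omega
end

section
/- For every vertex v, the AoI process is piecewise determined by the surviving indices: for every integer t ≥ 0, (i) if t < τ₁(v) then A(v,t) = A₀ + t; (ii) if τ_j(v) ≤ t < τ_{j+1}(v) for some 1 ≤ j ≤ k_v − 1, then A(v,t) = 1 + t − t_{i_j}; (iii) if t ≥ τ_{k_v}(v) then A(v,t) = 1 + t − t_k. -/
open Finset

/-! The age at `v` at time `t` is `t + 1 - t_m`, where `m` is the largest index among the seeds
whose update has reached `v` by time `t` (and `A0 + t` while none has). Inductively, an update
arriving at time `t + 1` is accepted exactly when it is fresher than the current age, that is,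
when its seed was selected after the current latest arrival, so the invariant persists. The
latest arrival is always a surviving index, and for `τ_j ≤ t < τ_{j+1}` it is `i_j`. -/

theorem Finset.eq_empty_or_exists_isGreatest {α : Type*} [LinearOrder α] (S : Finset α) :
    S = ∅ ∨ ∃ m, IsGreatest (S : Set α) m :=
  S.eq_empty_or_nonempty.imp_right fun h => ⟨_, S.isGreatest_max' h⟩

lemma tsel_le_tsel (Δ : ℕ) {a b : ℕ} (hab : a ≤ b) : tsel Δ a ≤ tsel Δ b :=
  Nat.add_le_add_right (Nat.mul_le_mul_right Δ (Nat.sub_le_sub_right hab 1)) 1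

lemma tsel_lt_tsel {Δ a b : ℕ} (hΔ : 0 < Δ) (ha : 1 ≤ a) (hab : a < b) :
    tsel Δ a < tsel Δ b := by
  unfold tsel
  have : (a - 1) * Δ < (b - 1) * Δ := Nat.mul_lt_mul_of_pos_right (by omega) hΔ
  omega

lemma one_le_tsel (Δ j : ℕ) : 1 ≤ tsel Δ j := Nat.le_add_left 1 _

section Arrivals

variable {V : Type*} (G : SimpleGraph V) (s : ℕ → V) (Δ k : ℕ) (v : V)

noncomputable def arrival (x : ℕ) : ℕ := tsel Δ x + G.dist (s x) v

noncomputable def arrived (t : ℕ) : Finset ℕ := (Icc 1 k).filter (fun x => arrival G s Δ v x ≤ t)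

variable {G s Δ k v}

lemma mem_arrived {t x : ℕ} :
    x ∈ arrived G s Δ k v t ↔ x ∈ Icc 1 k ∧ arrival G s Δ v x ≤ t :=
  mem_filter

lemma arrived_mono {t t' : ℕ} (h : t ≤ t') : arrived G s Δ k v t ⊆ arrived G s Δ k v t' :=
  fun _ hx => mem_arrived.2 ⟨(mem_arrived.1 hx).1, (mem_arrived.1 hx).2.trans h⟩

lemma isGreatest_arrived_self {t : ℕ} (hk : 1 ≤ k) (h : arrival G s Δ v k ≤ t) :
    IsGreatest (arrived G s Δ k v t : Set ℕ) k :=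
  ⟨mem_arrived.2 ⟨mem_Icc.2 ⟨hk, le_rfl⟩, h⟩, fun _ hx => (mem_Icc.1 (mem_arrived.1 hx).1).2⟩

lemma mem_Dset {x : ℕ} :
    x ∈ Dset G s Δ k v ↔ x ∈ Icc 1 k ∧
      ∀ y ∈ Icc 1 k, x < y → arrival G s Δ v x < arrival G s Δ v y := by
  simp only [Dset, arrival, mem_filter]

lemma self_mem_Dset (hk : 1 ≤ k) : k ∈ Dset G s Δ k v :=
  mem_Dset.2 ⟨mem_Icc.2 ⟨hk, le_rfl⟩, fun _ hy hky => absurd (mem_Icc.1 hy).2 (by omega)⟩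

lemma arrival_le_of_mem_Dset {x y : ℕ} (hx : x ∈ Dset G s Δ k v) (hy : y ∈ Icc 1 k)
    (hxy : x ≤ y) : arrival G s Δ v x ≤ arrival G s Δ v y := by
  rcases hxy.eq_or_lt with rfl | hlt
  · exact le_rfl
  · exact ((mem_Dset.1 hx).2 y hy hlt).le

lemma mem_Dset_of_isGreatest {t m : ℕ} (hm : IsGreatest (arrived G s Δ k v t : Set ℕ) m) :
    m ∈ Dset G s Δ k v := by
  obtain ⟨hmk, hmt⟩ := mem_arrived.1 hm.1
  refine mem_Dset.2 ⟨hmk, fun y hy hmy => ?_⟩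
  by_contra! hyt
  exact absurd (hm.2 (mem_arrived.2 ⟨hy, hyt.trans hmt⟩)) (by omega)

lemma isGreatest_arrived_of_mem_Dset {t m : ℕ} (hm : m ∈ Dset G s Δ k v)
    (hmt : arrival G s Δ v m ≤ t)
    (hlater : ∀ y ∈ Dset G s Δ k v, m < y → t < arrival G s Δ v y) :
    IsGreatest (arrived G s Δ k v t : Set ℕ) m := by
  have hm_arr : m ∈ arrived G s Δ k v t := mem_arrived.2 ⟨(mem_Dset.1 hm).1, hmt⟩
  rcases (arrived G s Δ k v t).eq_empty_or_exists_isGreatest with h | ⟨m', hm'⟩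
  · simp [h] at hm_arr
  · rcases (hm'.2 hm_arr).eq_or_lt with rfl | hlt
    · exact hm'
    · exact absurd (mem_arrived.1 hm'.1).2 (not_le.2 (hlater m' (mem_Dset_of_isGreatest hm') hlt))

end Arrivals

section Enumeration

variable {V : Type*} {G : SimpleGraph V} {s : ℕ → V} {Δ k : ℕ} {v : V} {i : ℕ → ℕ} {kv : ℕ}

lemma apply_mem_Dset (him : Dset G s Δ k v = (Icc 1 kv).image i) {l : ℕ}
    (hl : l ∈ Set.Icc 1 kv) : i l ∈ Dset G s Δ k v :=
  him ▸ mem_image_of_mem i (mem_Icc.2 hl)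

lemma monotoneOn_arrival_comp (hmono : StrictMonoOn i (Set.Icc 1 kv))
    (him : Dset G s Δ k v = (Icc 1 kv).image i) :
    MonotoneOn (arrival G s Δ v ∘ i) (Set.Icc 1 kv) := fun _ ha _ hb hab =>
  arrival_le_of_mem_Dset (apply_mem_Dset him ha) (mem_Dset.1 (apply_mem_Dset him hb)).1
    (hmono.monotoneOn ha hb hab)

lemma one_le_of_image_eq_Dset (hk : 1 ≤ k) (him : Dset G s Δ k v = (Icc 1 kv).image i) :
    1 ≤ kv := by
  obtain ⟨l, hl, -⟩ := mem_image.1 (him ▸ self_mem_Dset (s := s) (Δ := Δ) (v := v) hk)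
  exact (mem_Icc.1 hl).1.trans (mem_Icc.1 hl).2

lemma apply_eq_of_image_eq_Dset (hk : 1 ≤ k) (hmono : StrictMonoOn i (Set.Icc 1 kv))
    (him : Dset G s Δ k v = (Icc 1 kv).image i) : i kv = k := by
  have hkv : kv ∈ Set.Icc 1 kv := ⟨one_le_of_image_eq_Dset hk him, le_rfl⟩
  obtain ⟨l, hl, hlk⟩ := mem_image.1 (him ▸ self_mem_Dset (s := s) (Δ := Δ) (v := v) hk)
  exact le_antisymm (mem_Icc.1 (mem_Dset.1 (apply_mem_Dset him hkv)).1).2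
    (hlk ▸ hmono.monotoneOn (mem_Icc.1 hl) hkv (mem_Icc.1 hl).2)

lemma arrived_eq_empty_of_lt_arrival_apply_one {t : ℕ} (hkv : 1 ≤ kv)
    (hmono : StrictMonoOn i (Set.Icc 1 kv)) (him : Dset G s Δ k v = (Icc 1 kv).image i)
    (ht : t < arrival G s Δ v (i 1)) : arrived G s Δ k v t = ∅ := by
  refine (arrived G s Δ k v t).eq_empty_or_exists_isGreatest.resolve_right ?_
  rintro ⟨m, hm⟩
  obtain ⟨l, hl, rfl⟩ := mem_image.1 (him ▸ mem_Dset_of_isGreatest hm)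
  have := monotoneOn_arrival_comp hmono him ⟨le_rfl, hkv⟩ (mem_Icc.1 hl) (mem_Icc.1 hl).1
  have := (mem_arrived.1 hm.1).2
  simp only [Function.comp_apply] at *
  omega

lemma isGreatest_arrived_apply {t j : ℕ} (hmono : StrictMonoOn i (Set.Icc 1 kv))
    (him : Dset G s Δ k v = (Icc 1 kv).image i) (hj1 : 1 ≤ j) (hj : j + 1 ≤ kv)
    (hle : arrival G s Δ v (i j) ≤ t) (hlt : t < arrival G s Δ v (i (j + 1))) :
    IsGreatest (arrived G s Δ k v t : Set ℕ) (i j) := by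
  refine isGreatest_arrived_of_mem_Dset (apply_mem_Dset him ⟨hj1, by omega⟩) hle fun y hy hjy => ?_
  obtain ⟨l, hl, rfl⟩ := mem_image.1 (him ▸ hy)
  have hjl : j < l := (hmono.lt_iff_lt ⟨hj1, by omega⟩ (mem_Icc.1 hl)).1 hjy
  exact hlt.trans_le (monotoneOn_arrival_comp hmono him ⟨by omega, hj⟩ (mem_Icc.1 hl) hjl)

end Enumeration

section Dynamics

variable {V : Type*} {G : SimpleGraph V} {s : ℕ → V} {Δ k A0 : ℕ} {v : V}

lemma AoI_succ_of_forall_le_dist {t : ℕ}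
    (h : ∀ j ∈ Icc 1 k, arrival G s Δ v j = t + 1 → AoI G s Δ k A0 v t ≤ G.dist (s j) v) :
    AoI G s Δ k A0 v (t + 1) = AoI G s Δ k A0 v t + 1 := by
  rw [AoI]
  refine dif_neg ?_
  rintro ⟨j, hj⟩
  obtain ⟨hjk, hjt, hjA⟩ := mem_filter.1 hj
  have := h j hjk hjt.symm
  omega

lemma AoI_succ_of_arrival_eq {t m : ℕ} (hm : m ∈ Icc 1 k) (hmt : arrival G s Δ v m = t + 1)
    (hfresh : G.dist (s m) v + 1 ≤ AoI G s Δ k A0 v t)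
    (hmin : ∀ j ∈ Icc 1 k, arrival G s Δ v j = t + 1 → G.dist (s m) v ≤ G.dist (s j) v) :
    AoI G s Δ k A0 v (t + 1) = 1 + G.dist (s m) v := by
  have hmΩ : m ∈ (Icc 1 k).filter (fun j => t + 1 = tsel Δ j + G.dist (s j) v ∧
      G.dist (s j) v + 1 ≤ AoI G s Δ k A0 v t) := mem_filter.2 ⟨hm, hmt.symm, hfresh⟩
  rw [AoI]
  refine (dif_pos ⟨m, hmΩ⟩).trans (le_antisymm (inf'_le _ hmΩ) (le_inf' _ _ fun j hj => ?_))
  obtain ⟨hjk, hjt, -⟩ := mem_filter.1 hj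
  exact Nat.add_le_add_left (hmin j hjk hjt.symm) 1

lemma AoI_of_arrived_eq_empty {t : ℕ} (h : arrived G s Δ k v t = ∅) :
    AoI G s Δ k A0 v t = A0 + t := by
  induction t with
  | zero => rfl
  | succ t ih =>
    have hnone : ∀ j ∈ Icc 1 k, arrival G s Δ v j ≠ t + 1 := fun j hj hjt => by
      simpa [h] using mem_arrived.2 ⟨hj, hjt.le⟩
    rw [AoI_succ_of_forall_le_dist (fun j hj hjt => absurd hjt (hnone j hj)),
      ih (subset_empty.1 (h ▸ arrived_mono (Nat.le_succ t)))]
    omega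

lemma isGreatest_arrived_of_succ {t m : ℕ} (hm : IsGreatest (arrived G s Δ k v (t + 1) : Set ℕ) m)
    (hmt : arrival G s Δ v m ≤ t) : IsGreatest (arrived G s Δ k v t : Set ℕ) m :=
  ⟨mem_arrived.2 ⟨(mem_arrived.1 hm.1).1, hmt⟩,
    fun _ hx => hm.2 (arrived_mono (Nat.le_succ t) hx)⟩

lemma tsel_lt_tsel_of_isGreatest (hΔ : 0 < Δ) {t m j : ℕ}
    (hm : IsGreatest (arrived G s Δ k v t : Set ℕ) m) (hj : j ∈ Icc 1 k)
    (hjt : arrival G s Δ v j ≤ t) (hne : arrival G s Δ v j ≠ arrival G s Δ v m) :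
    tsel Δ j < tsel Δ m :=
  tsel_lt_tsel hΔ (mem_Icc.1 hj).1 <|
    (hm.2 (mem_arrived.2 ⟨hj, hjt⟩)).lt_of_ne fun hjm => hne (hjm ▸ rfl)

lemma AoI_succ_add_tsel_of_arrival_le (hΔ : 0 < Δ) {t m : ℕ}
    (hm : IsGreatest (arrived G s Δ k v (t + 1) : Set ℕ) m) (hmt : arrival G s Δ v m ≤ t)
    (hAoI : AoI G s Δ k A0 v t + tsel Δ m = t + 1) :
    AoI G s Δ k A0 v (t + 1) + tsel Δ m = t + 1 + 1 := by
  rw [AoI_succ_of_forall_le_dist fun j hj hjt => ?_]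
  · omega
  have := tsel_lt_tsel_of_isGreatest hΔ hm hj hjt.le (by omega)
  unfold arrival at hjt
  omega

lemma AoI_succ_add_tsel_of_arrival_eq (hΔ : 0 < Δ) (hA0 : 1 ≤ A0) {t m : ℕ}
    (hm : IsGreatest (arrived G s Δ k v (t + 1) : Set ℕ) m) (hmt : arrival G s Δ v m = t + 1)
    (hprev : ∀ m', IsGreatest (arrived G s Δ k v t : Set ℕ) m' →
      AoI G s Δ k A0 v t + tsel Δ m' = t + 1) :
    AoI G s Δ k A0 v (t + 1) + tsel Δ m = t + 1 + 1 := by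
  have hmk := (mem_arrived.1 hm.1).1
  -- `m` was selected after the latest arrival `m'` at time `t`, if any, and the age at `t` is
  -- the time elapsed since `m'` was selected (or `A0 + t`).
  have hfresh : G.dist (s m) v + 1 ≤ AoI G s Δ k A0 v t := by
    rcases (arrived G s Δ k v t).eq_empty_or_exists_isGreatest with h | ⟨m', hm'⟩
    · have := one_le_tsel Δ m
      rw [AoI_of_arrived_eq_empty h]
      unfold arrival at hmt
      omega
    · have hm't := (mem_arrived.1 hm'.1).2
      have := tsel_lt_tsel_of_isGreatest hΔ hm (mem_arrived.1 hm'.1).1 (by omega) (by omega)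
      have := hprev m' hm'
      unfold arrival at hmt
      omega
  rw [AoI_succ_of_arrival_eq hmk hmt hfresh fun j hj hjt => ?_]
  · unfold arrival at hmt
    omega
  have := tsel_le_tsel Δ (hm.2 (mem_arrived.2 ⟨hj, hjt.le⟩))
  unfold arrival at hjt hmt
  omega

theorem AoI_add_tsel_of_isGreatest (hΔ : 0 < Δ) (hA0 : 1 ≤ A0) {t m : ℕ}
    (hm : IsGreatest (arrived G s Δ k v t : Set ℕ) m) :
    AoI G s Δ k A0 v t + tsel Δ m = t + 1 := by
  induction t generalizing m with
  | zero =>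
    have := (mem_arrived.1 hm.1).2
    have := one_le_tsel Δ m
    unfold arrival at *
    omega
  | succ t ih =>
    rcases (mem_arrived.1 hm.1).2.lt_or_eq with hmt | hmt
    · exact AoI_succ_add_tsel_of_arrival_le hΔ hm (Nat.le_of_lt_succ hmt)
        (ih (isGreatest_arrived_of_succ hm (Nat.le_of_lt_succ hmt)))
    · exact AoI_succ_add_tsel_of_arrival_eq hΔ hA0 hm hmt fun _ => ih

end Dynamics

theorem stmt3_general {V : Type*} (G : SimpleGraph V)
    (s : ℕ → V) (Δ k A0 : ℕ) (hΔ : 1 ≤ Δ) (hk : 1 ≤ k) (hA0 : 1 ≤ A0)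
    (v : V) (i : ℕ → ℕ) (kv : ℕ)
    (hmono : StrictMonoOn i (Set.Icc 1 kv))
    (him : Dset G s Δ k v = (Finset.Icc 1 kv).image i)
    (t : ℕ) :
    (t < tsel Δ (i 1) + G.dist (s (i 1)) v → AoI G s Δ k A0 v t = A0 + t) ∧
    (∀ j, 1 ≤ j → j ≤ kv - 1 →
      tsel Δ (i j) + G.dist (s (i j)) v ≤ t →
      t < tsel Δ (i (j + 1)) + G.dist (s (i (j + 1))) v →
      AoI G s Δ k A0 v t = 1 + t - tsel Δ (i j)) ∧
    (tsel Δ (i kv) + G.dist (s (i kv)) v ≤ t →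
      AoI G s Δ k A0 v t = 1 + t - tsel Δ k) := by
  have hkv := one_le_of_image_eq_Dset hk him
  refine ⟨fun ht => AoI_of_arrived_eq_empty
      (arrived_eq_empty_of_lt_arrival_apply_one hkv hmono him ht), fun j hj1 hj hle hlt => ?_,
    fun hle => ?_⟩
  · have := AoI_add_tsel_of_isGreatest hΔ hA0
      (isGreatest_arrived_apply hmono him hj1 (by omega) hle hlt)
    omega
  · rw [apply_eq_of_image_eq_Dset hk hmono him] at hle
    have := AoI_add_tsel_of_isGreatest hΔ hA0 (isGreatest_arrived_self hk hle)
    omega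

theorem stmt3 {V : Type*} [Fintype V] (G : SimpleGraph V) (hconn : G.Connected)
    (s : ℕ → V) (Δ k A0 : ℕ) (hΔ : 1 ≤ Δ) (hk : 1 ≤ k) (hA0 : 1 ≤ A0)
    (v : V) (i : ℕ → ℕ) (kv : ℕ) (hkv : kv = (Dset G s Δ k v).card)
    (hi0 : i 0 = 1)
    (hmono : StrictMonoOn i (Set.Icc 1 kv))
    (him : Dset G s Δ k v = (Finset.Icc 1 kv).image i)
    (t : ℕ) :
    (t < tsel Δ (i 1) + G.dist (s (i 1)) v → AoI G s Δ k A0 v t = A0 + t) ∧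
    (∀ j, 1 ≤ j → j ≤ kv - 1 →
      tsel Δ (i j) + G.dist (s (i j)) v ≤ t →
      t < tsel Δ (i (j + 1)) + G.dist (s (i (j + 1))) v →
      AoI G s Δ k A0 v t = 1 + t - tsel Δ (i j)) ∧
    (tsel Δ (i kv) + G.dist (s (i kv)) v ≤ t →
      AoI G s Δ k A0 v t = 1 + t - tsel Δ k) :=
  stmt3_general G s Δ k A0 hΔ hk hA0 v i kv hmono him t
end

section
/- The average AoI of the network can be reformulated as (1/(nT)) Σ_{v ∈ V} ∫₀^T A(v,t) dt = η + (1/(2nT)) Σ_{v ∈ V} { 2A₀·[Δ·i₁(v) + dist(s_{i₁}, v)] + 2Δ·Σ_{j=1}^{k_v} (i_j − i_{j−1})·dist(s_{i_j}, v) + Δ²·Σ_{j=1}^{k_v} (i_j − i_{j−1})² }, where η = (1/(2T))·[ 2A₀ − 2ΔA₀ + T² + 2ΔT + Δ² − 2Δ + 2(Δ − TΔ − Δ²)k + Δ²k² ] is a constant independent of the seeding sequence. -/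
open Finset

namespace Stmt6Aux

variable {V : Type*} (G : SimpleGraph V) (s : ℕ → V) (Δ k A0 : ℕ) (v : V)

lemma tsel_pos (j : ℕ) : 1 ≤ tsel Δ j := Nat.le_add_left 1 _

lemma tsel_mono {a b : ℕ} (hab : a ≤ b) : tsel Δ a ≤ tsel Δ b := by
  unfold tsel
  have := Nat.mul_le_mul_right Δ (Nat.sub_le_sub_right hab 1)
  omega

lemma tsel_strict (hΔ : 1 ≤ Δ) {a b : ℕ} (ha : 1 ≤ a) (hab : a < b) :
    tsel Δ a + 1 ≤ tsel Δ b := by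
  unfold tsel
  have h1 : (a - 1) + 1 ≤ b - 1 := by omega
  have h2 := Nat.mul_le_mul_right Δ h1
  rw [Nat.add_mul, one_mul] at h2
  omega

lemma k_mem_Dset (hk : 1 ≤ k) : k ∈ Dset G s Δ k v := by
  classical
  unfold Dset
  simp only [mem_filter]
  refine ⟨mem_Icc.2 ⟨hk, le_rfl⟩, fun y hy hlt => absurd (mem_Icc.1 hy).2 (by omega)⟩

lemma Dset_subset : Dset G s Δ k v ⊆ Finset.Icc 1 k := by
  classical
  intro x hx
  unfold Dset at hx
  simp only [mem_filter] at hx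
  exact hx.1

lemma Dset_prop {x y : ℕ} (hx : x ∈ Dset G s Δ k v) (hy : y ∈ Finset.Icc 1 k) (hxy : x < y) :
    tsel Δ x + G.dist (s x) v < tsel Δ y + G.dist (s y) v := by
  classical
  unfold Dset at hx
  simp only [mem_filter] at hx
  exact hx.2 y hy hxy

lemma dominate (hk : 1 ≤ k) :
    ∀ m x, x ∈ Finset.Icc 1 k → k - x ≤ m →
      ∃ z ∈ Dset G s Δ k v, x ≤ z ∧
        tsel Δ z + G.dist (s z) v ≤ tsel Δ x + G.dist (s x) v := by
  intro m
  induction m with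
  | zero =>
    intro x hx h0
    have hxk : x = k := by have := mem_Icc.1 hx; omega
    exact ⟨k, k_mem_Dset G s Δ k v hk, le_of_eq hxk, by rw [hxk]⟩
  | succ m ih =>
    intro x hx hle
    classical
    by_cases hxD : x ∈ Dset G s Δ k v
    · exact ⟨x, hxD, le_rfl, le_rfl⟩
    · have hex : ∃ y ∈ Finset.Icc 1 k, x < y ∧
          tsel Δ y + G.dist (s y) v ≤ tsel Δ x + G.dist (s x) v := by
        unfold Dset at hxD
        simp only [mem_filter] at hxD
        push_neg at hxD
        obtain ⟨y, hy, h1, h2⟩ := hxD hx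
        exact ⟨y, hy, h1, h2⟩
      obtain ⟨y, hy, hxy, harr⟩ := hex
      obtain ⟨z, hz, h1, h2⟩ := ih y hy (by have := mem_Icc.1 hy; have := mem_Icc.1 hx; omega)
      exact ⟨z, hz, by omega, le_trans h2 harr⟩

lemma AoI_succ_of_empty (u : ℕ)
    (hΩ : ¬ ((Finset.Icc 1 k).filter
      (fun j => u + 1 = tsel Δ j + G.dist (s j) v ∧
        G.dist (s j) v + 1 ≤ AoI G s Δ k A0 v u)).Nonempty) :
    AoI G s Δ k A0 v (u + 1) = AoI G s Δ k A0 v u + 1 := by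
  rw [AoI]
  exact dif_neg hΩ

lemma AoI_succ_of_mem (u x : ℕ)
    (hx : x ∈ (Finset.Icc 1 k).filter
      (fun j => u + 1 = tsel Δ j + G.dist (s j) v ∧
        G.dist (s j) v + 1 ≤ AoI G s Δ k A0 v u))
    (hmin : ∀ y ∈ (Finset.Icc 1 k).filter
      (fun j => u + 1 = tsel Δ j + G.dist (s j) v ∧
        G.dist (s j) v + 1 ≤ AoI G s Δ k A0 v u),
      G.dist (s x) v ≤ G.dist (s y) v) :
    AoI G s Δ k A0 v (u + 1) = 1 + G.dist (s x) v := by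
  rw [AoI]
  refine (dif_pos ⟨x, hx⟩).trans (le_antisymm (Finset.inf'_le _ hx) ?_)
  exact Finset.le_inf' _ _ (fun y hy => by simpa using hmin y hy)

section PerVertex

variable {V : Type*} (G : SimpleGraph V) (s : ℕ → V) (Δ k A0 : ℕ) (v : V)
variable (i : ℕ → ℕ) (kv : ℕ)

noncomputable def tau (j : ℕ) : ℕ := tsel Δ (i j) + G.dist (s (i j)) v

lemma tau_def (j : ℕ) : tau G s Δ v i j = tsel Δ (i j) + G.dist (s (i j)) v := rfl

lemma tau_pos (j : ℕ) : 1 ≤ tau G s Δ v i j :=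
  le_trans (tsel_pos Δ _) (Nat.le_add_right _ _)

lemma i_mem_Dset (him : Dset G s Δ k v = (Finset.Icc 1 kv).image i)
    {j : ℕ} (hj : j ∈ Finset.Icc 1 kv) : i j ∈ Dset G s Δ k v := by
  rw [him]; exact mem_image_of_mem i hj

lemma i_mem_Icc (him : Dset G s Δ k v = (Finset.Icc 1 kv).image i)
    {j : ℕ} (hj : j ∈ Finset.Icc 1 kv) : i j ∈ Finset.Icc 1 k :=
  Dset_subset G s Δ k v (i_mem_Dset G s Δ k v i kv him hj)

lemma kv_pos (hk : 1 ≤ k) (him : Dset G s Δ k v = (Finset.Icc 1 kv).image i) :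
    1 ≤ kv := by
  have h := k_mem_Dset G s Δ k v hk
  rw [him, mem_image] at h
  obtain ⟨j, hj, -⟩ := h
  have := mem_Icc.1 hj; omega

lemma i_top (hk : 1 ≤ k) (hmono : StrictMonoOn i (Set.Icc 1 kv))
    (him : Dset G s Δ k v = (Finset.Icc 1 kv).image i) : i kv = k := by
  have hkD := k_mem_Dset G s Δ k v hk
  rw [him, mem_image] at hkD
  obtain ⟨j0, hj0, hj0k⟩ := hkD
  have hj0' := mem_Icc.1 hj0
  rcases eq_or_lt_of_le hj0'.2 with h | h
  · rw [← h]; exact hj0k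
  · exfalso
    have hkv1 : 1 ≤ kv := by omega
    have hlt : i j0 < i kv :=
      hmono (Set.mem_Icc.2 ⟨hj0'.1, hj0'.2⟩) (Set.mem_Icc.2 ⟨hkv1, le_rfl⟩) h
    have hle := mem_Icc.1
      (i_mem_Icc G s Δ k v i kv him (mem_Icc.2 ⟨hkv1, le_rfl⟩))
    omega

lemma tau_strict (hmono : StrictMonoOn i (Set.Icc 1 kv))
    (him : Dset G s Δ k v = (Finset.Icc 1 kv).image i)
    {a b : ℕ} (ha : a ∈ Finset.Icc 1 kv) (hb : b ∈ Finset.Icc 1 kv) (hab : a < b) :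
    tau G s Δ v i a < tau G s Δ v i b :=
  Dset_prop G s Δ k v (i_mem_Dset G s Δ k v i kv him ha)
    (i_mem_Icc G s Δ k v i kv him hb)
    (hmono (Set.mem_Icc.2 (mem_Icc.1 ha)) (Set.mem_Icc.2 (mem_Icc.1 hb)) hab)

lemma tau_mono (hmono : StrictMonoOn i (Set.Icc 1 kv))
    (him : Dset G s Δ k v = (Finset.Icc 1 kv).image i)
    {a b : ℕ} (ha : a ∈ Finset.Icc 1 kv) (hb : b ∈ Finset.Icc 1 kv) (hab : a ≤ b) :
    tau G s Δ v i a ≤ tau G s Δ v i b := by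
  rcases eq_or_lt_of_le hab with h | h
  · rw [h]
  · exact (tau_strict G s Δ k v i kv hmono him ha hb h).le

lemma AoI_eq (hΔ : 1 ≤ Δ) (hk : 1 ≤ k) (hA0 : 1 ≤ A0)
    (hmono : StrictMonoOn i (Set.Icc 1 kv))
    (him : Dset G s Δ k v = (Finset.Icc 1 kv).image i) :
    ∀ t : ℕ,
      (t + 1 ≤ tau G s Δ v i 1 → AoI G s Δ k A0 v t = A0 + t) ∧
      (∀ j, j ∈ Finset.Icc 1 kv → tau G s Δ v i j ≤ t →
        (∀ j', j' ∈ Finset.Icc 1 kv → tau G s Δ v i j' ≤ t → j' ≤ j) →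
        AoI G s Δ k A0 v t + tau G s Δ v i j = t + G.dist (s (i j)) v + 1) := by
  intro t
  induction t using Nat.strong_induction_on with
  | _ t IH =>
  rcases t with _ | u
  · refine ⟨fun _ => by simp [AoI], fun j hj hτ _ => absurd hτ ?_⟩
    have := tau_pos G s Δ v i j; omega
  · constructor
    · -- before first reset
      intro h2
      have hΩ : ¬ ((Finset.Icc 1 k).filter
          (fun j => u + 1 = tsel Δ j + G.dist (s j) v ∧
            G.dist (s j) v + 1 ≤ AoI G s Δ k A0 v u)).Nonempty := by
        rintro ⟨x, hx⟩
        rw [mem_filter] at hx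
        obtain ⟨hxI, hxt, -⟩ := hx
        obtain ⟨z, hz, hxz, hzarr⟩ := dominate G s Δ k v hk (k - x) x hxI le_rfl
        rw [him, mem_image] at hz
        obtain ⟨j, hj, rfl⟩ := hz
        have h1 : (1:ℕ) ∈ Finset.Icc 1 kv :=
          mem_Icc.2 ⟨le_rfl, kv_pos G s Δ k v i kv hk him⟩
        have hmono1 : tau G s Δ v i 1 ≤ tau G s Δ v i j :=
          tau_mono G s Δ k v i kv hmono him h1 hj (mem_Icc.1 hj).1
        have ht1 := tau_def G s Δ v i j
        omega
      rw [AoI_succ_of_empty G s Δ k A0 v u hΩ, (IH u (by omega)).1 (by omega)]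
      omega
    · intro j hj hτj hmax
      rcases Nat.lt_or_ge u (tau G s Δ v i j) with hge | hlt
      · -- reset at u+1 : tau j = u+1
        have heq : tau G s Δ v i j = u + 1 := by omega
        have hjIcc := mem_Icc.1 hj
        have hage : G.dist (s (i j)) v + 1 ≤ AoI G s Δ k A0 v u := by
          by_cases hj1 : j = 1
          · subst hj1
            have hprev := (IH u (by omega)).1 (by omega)
            have ht1 := tau_def G s Δ v i 1
            have := tsel_pos Δ (i 1)
            omega
          · have hj2 : 2 ≤ j := by omega
            have hjm : j - 1 ∈ Finset.Icc 1 kv := mem_Icc.2 ⟨by omega, by omega⟩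
            have hτlt : tau G s Δ v i (j-1) < tau G s Δ v i j :=
              tau_strict G s Δ k v i kv hmono him hjm hj (by omega)
            have hmax'' : ∀ j' ∈ Finset.Icc 1 kv, tau G s Δ v i j' ≤ u → j' ≤ j - 1 := by
              intro j' h1 h2
              have hj'j : j' ≤ j := hmax j' h1 (by omega)
              by_cases h : j' = j
              · subst h; omega
              · omega
            have hIHp := (IH u (by omega)).2 (j-1) hjm (by omega) hmax''
            have hstrict : tsel Δ (i (j-1)) + 1 ≤ tsel Δ (i j) := by
              apply tsel_strict Δ hΔ
              · exact (mem_Icc.1 (i_mem_Icc G s Δ k v i kv him hjm)).1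
              · exact hmono (Set.mem_Icc.2 (mem_Icc.1 hjm))
                  (Set.mem_Icc.2 (mem_Icc.1 hj)) (by omega)
            have ht1 := tau_def G s Δ v i j
            have ht2 := tau_def G s Δ v i (j-1)
            omega
        have hxmem : i j ∈ (Finset.Icc 1 k).filter
            (fun j' => u + 1 = tsel Δ j' + G.dist (s j') v ∧
              G.dist (s j') v + 1 ≤ AoI G s Δ k A0 v u) := by
          rw [mem_filter]
          exact ⟨i_mem_Icc G s Δ k v i kv him hj, heq.symm, hage⟩
        have hmin : ∀ y ∈ (Finset.Icc 1 k).filter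
            (fun j' => u + 1 = tsel Δ j' + G.dist (s j') v ∧
              G.dist (s j') v + 1 ≤ AoI G s Δ k A0 v u),
            G.dist (s (i j)) v ≤ G.dist (s y) v := by
          intro y hy
          rw [mem_filter] at hy
          obtain ⟨hyI, hyt, -⟩ := hy
          by_cases hcase : i j < y
          · exfalso
            have hD := Dset_prop G s Δ k v (i_mem_Dset G s Δ k v i kv him hj) hyI hcase
            have ht1 := tau_def G s Δ v i j
            omega
          · push_neg at hcase
            have := tsel_mono Δ hcase
            have ht1 := tau_def G s Δ v i j
            omega
        rw [AoI_succ_of_mem G s Δ k A0 v u (i j) hxmem hmin]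
        omega
      · -- no reset at u+1 for this segment
        have hmax' : ∀ j' ∈ Finset.Icc 1 kv, tau G s Δ v i j' ≤ u → j' ≤ j :=
          fun j' h1 h2 => hmax j' h1 (by omega)
        have hIHp := (IH u (by omega)).2 j hj hlt hmax'
        have hΩ : ¬ ((Finset.Icc 1 k).filter
            (fun j' => u + 1 = tsel Δ j' + G.dist (s j') v ∧
              G.dist (s j') v + 1 ≤ AoI G s Δ k A0 v u)).Nonempty := by
          rintro ⟨x, hx⟩
          rw [mem_filter] at hx
          obtain ⟨hxI, hxt, hxage⟩ := hx
          obtain ⟨z, hz, hxz, hzarr⟩ := dominate G s Δ k v hk (k - x) x hxI le_rfl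
          rw [him, mem_image] at hz
          obtain ⟨j'', hj'', rfl⟩ := hz
          have ht2 := tau_def G s Δ v i j''
          have hj''j : j'' ≤ j := hmax j'' hj'' (by omega)
          have hij : i j'' ≤ i j := by
            rcases eq_or_lt_of_le hj''j with h | h
            · rw [h]
            · exact (hmono (Set.mem_Icc.2 (mem_Icc.1 hj''))
                (Set.mem_Icc.2 (mem_Icc.1 hj)) h).le
          have htsel : tsel Δ x ≤ tsel Δ (i j) := tsel_mono Δ (le_trans hxz hij)
          have ht1 := tau_def G s Δ v i j
          omega
        rw [AoI_succ_of_empty G s Δ k A0 v u hΩ]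
        omega

end PerVertex

noncomputable def drop (Δ A0 : ℕ) (i : ℕ → ℕ) (j : ℕ) : ℝ :=
  (Δ:ℝ) * ((i j : ℝ) - (i (j-1) : ℝ)) + (if j = 1 then (A0:ℝ) else 0)

lemma sum_drop (A0 : ℕ) (Δ : ℕ) (i : ℕ → ℕ) (hi0 : i 0 = 1) {J : ℕ} (hJ1 : 1 ≤ J) :
    ∑ j ∈ Finset.Icc 1 J, drop Δ A0 i j = (A0:ℝ) + (Δ:ℝ) * ((i J : ℝ) - 1) := by
  have h1 : ∑ j ∈ Finset.Icc 1 J, drop Δ A0 i j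
      = ∑ j ∈ Finset.range J, drop Δ A0 i (j+1) := by
    rw [← Finset.Ico_add_one_right_eq_Icc, Finset.sum_Ico_eq_sum_range]
    simp [add_comm]
  rw [h1]
  have h2 : ∀ j ∈ Finset.range J, drop Δ A0 i (j+1)
      = (Δ:ℝ) * ((i (j+1) : ℝ) - (i j : ℝ)) + (if j = 0 then (A0:ℝ) else 0) := by
    intro j _
    unfold drop
    have hj1 : j + 1 - 1 = j := rfl
    rw [hj1]
    congr 1
    by_cases h : j = 0 <;> simp [h]
  rw [Finset.sum_congr rfl h2, Finset.sum_add_distrib]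
  have h3 : ∑ j ∈ Finset.range J, (Δ:ℝ) * ((i (j+1) : ℝ) - (i j : ℝ))
      = (Δ:ℝ) * ((i J : ℝ) - (i 0 : ℝ)) := by
    rw [← Finset.mul_sum, Finset.sum_range_sub (fun m => (i m : ℝ))]
  have h4 : ∑ j ∈ Finset.range J, (if j = 0 then (A0:ℝ) else 0) = (A0:ℝ) := by
    rw [Finset.sum_ite_eq' (Finset.range J) 0 (fun _ => (A0:ℝ)),
      if_pos (Finset.mem_range.2 (by omega))]
  rw [h3, h4, hi0]
  push_cast
  ring

section ClosedForm

variable {V : Type*} (G : SimpleGraph V) (s : ℕ → V) (Δ k A0 : ℕ) (v : V)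
variable (i : ℕ → ℕ) (kv : ℕ)

lemma AoI_closed (hΔ : 1 ≤ Δ) (hk : 1 ≤ k) (hA0 : 1 ≤ A0) (hi0 : i 0 = 1)
    (hmono : StrictMonoOn i (Set.Icc 1 kv))
    (him : Dset G s Δ k v = (Finset.Icc 1 kv).image i) (t : ℕ) :
    (AoI G s Δ k A0 v t : ℝ)
      = (A0:ℝ) + t - ∑ j ∈ (Finset.Icc 1 kv).filter
          (fun j => tau G s Δ v i j ≤ t), drop Δ A0 i j := by
  classical
  by_cases hbefore : t + 1 ≤ tau G s Δ v i 1
  · have hempty : (Finset.Icc 1 kv).filter (fun j => tau G s Δ v i j ≤ t) = ∅ := by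
      rw [Finset.filter_eq_empty_iff]
      intro j hj
      have := tau_mono G s Δ k v i kv hmono him
        (mem_Icc.2 ⟨le_rfl, kv_pos G s Δ k v i kv hk him⟩) hj (mem_Icc.1 hj).1
      omega
    rw [hempty, (AoI_eq G s Δ k A0 v i kv hΔ hk hA0 hmono him t).1 hbefore]
    push_cast
    ring
  · have h1kv : (1:ℕ) ∈ Finset.Icc 1 kv :=
      mem_Icc.2 ⟨le_rfl, kv_pos G s Δ k v i kv hk him⟩
    have htau1 : tau G s Δ v i 1 ≤ t := by omega
    set F := (Finset.Icc 1 kv).filter (fun j => tau G s Δ v i j ≤ t) with hF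
    have hne : F.Nonempty := ⟨1, mem_filter.2 ⟨h1kv, htau1⟩⟩
    set J := F.max' hne with hJ
    have hJF : J ∈ F := F.max'_mem hne
    have hJIcc : J ∈ Finset.Icc 1 kv := (mem_filter.1 hJF).1
    have hJt : tau G s Δ v i J ≤ t := (mem_filter.1 hJF).2
    have hmaxJ : ∀ j' ∈ Finset.Icc 1 kv, tau G s Δ v i j' ≤ t → j' ≤ J :=
      fun j' h1 h2 => F.le_max' j' (mem_filter.2 ⟨h1, h2⟩)
    have hval := (AoI_eq G s Δ k A0 v i kv hΔ hk hA0 hmono him t).2 J hJIcc hJt hmaxJ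
    have hFI : F = Finset.Icc 1 J := by
      ext j'
      simp only [hF, Finset.mem_filter, Finset.mem_Icc]
      constructor
      · rintro ⟨⟨ha, hb⟩, h2⟩
        exact ⟨ha, hmaxJ j' (mem_Icc.2 ⟨ha, hb⟩) h2⟩
      · rintro ⟨h1, h2⟩
        have hj'I : j' ∈ Finset.Icc 1 kv :=
          mem_Icc.2 ⟨h1, le_trans h2 (mem_Icc.1 hJIcc).2⟩
        exact ⟨mem_Icc.1 hj'I, le_trans
          (tau_mono G s Δ k v i kv hmono him hj'I hJIcc h2) hJt⟩
    rw [hFI, sum_drop A0 Δ i hi0 (mem_Icc.1 hJIcc).1]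
    have hiJ1 : 1 ≤ i J := (mem_Icc.1 (i_mem_Icc G s Δ k v i kv him hJIcc)).1
    have hcast : (AoI G s Δ k A0 v t : ℝ) + (tau G s Δ v i J : ℝ)
        = (t:ℝ) + (G.dist (s (i J)) v : ℝ) + 1 := by exact_mod_cast hval
    have htselR : (tau G s Δ v i J : ℝ)
        = ((i J : ℝ) - 1) * Δ + 1 + (G.dist (s (i J)) v : ℝ) := by
      rw [tau_def]
      unfold tsel
      push_cast [hiJ1]
      ring
    linarith [hcast, htselR]

lemma sum_AoI (hΔ : 1 ≤ Δ) (hk : 1 ≤ k) (hA0 : 1 ≤ A0) (hi0 : i 0 = 1)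
    (hmono : StrictMonoOn i (Set.Icc 1 kv))
    (him : Dset G s Δ k v = (Finset.Icc 1 kv).image i)
    (T : ℕ) (hTk : tau G s Δ v i kv ≤ T) :
    ∑ t ∈ Finset.range T, (AoI G s Δ k A0 v t : ℝ)
      = T * A0 + (∑ t ∈ Finset.range T, (t:ℝ))
        - ∑ j ∈ Finset.Icc 1 kv, ((T:ℝ) - tau G s Δ v i j) * drop Δ A0 i j := by
  classical
  have h1 : ∑ t ∈ Finset.range T, (AoI G s Δ k A0 v t : ℝ)
      = ∑ t ∈ Finset.range T, ((A0:ℝ) + t - ∑ j ∈ (Finset.Icc 1 kv).filter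
          (fun j => tau G s Δ v i j ≤ t), drop Δ A0 i j) :=
    Finset.sum_congr rfl (fun t _ => AoI_closed G s Δ k A0 v i kv hΔ hk hA0 hi0 hmono him t)
  rw [h1, Finset.sum_sub_distrib, Finset.sum_add_distrib, Finset.sum_const]
  have h2 : ∑ t ∈ Finset.range T, ∑ j ∈ (Finset.Icc 1 kv).filter
        (fun j => tau G s Δ v i j ≤ t), drop Δ A0 i j
      = ∑ j ∈ Finset.Icc 1 kv, ((T:ℝ) - tau G s Δ v i j) * drop Δ A0 i j := by
    have h3 : ∀ t ∈ Finset.range T, ∑ j ∈ (Finset.Icc 1 kv).filter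
          (fun j => tau G s Δ v i j ≤ t), drop Δ A0 i j
        = ∑ j ∈ Finset.Icc 1 kv, (if tau G s Δ v i j ≤ t then drop Δ A0 i j else 0) :=
      fun t _ => Finset.sum_filter _ _
    rw [Finset.sum_congr rfl h3]
    rw [Finset.sum_comm]
    refine Finset.sum_congr rfl (fun j hj => ?_)
    have h4 : ∑ t ∈ Finset.range T, (if tau G s Δ v i j ≤ t then drop Δ A0 i j else 0)
        = ∑ t ∈ (Finset.range T).filter (fun t => tau G s Δ v i j ≤ t), drop Δ A0 i j :=
      (Finset.sum_filter _ _).symm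
    rw [h4]
    have h5 : (Finset.range T).filter (fun t => tau G s Δ v i j ≤ t)
        = Finset.Ico (tau G s Δ v i j) T := by
      ext x; simp only [Finset.mem_filter, Finset.mem_range, Finset.mem_Ico]
      omega
    rw [h5, Finset.sum_const, Nat.card_Ico, nsmul_eq_mul]
    have hτT : tau G s Δ v i j ≤ T := le_trans (tau_mono G s Δ k v i kv hmono him hj
      (mem_Icc.2 ⟨kv_pos G s Δ k v i kv hk him, le_rfl⟩) (mem_Icc.1 hj).2) hTk
    have : ((T - tau G s Δ v i j : ℕ) : ℝ) = (T:ℝ) - (tau G s Δ v i j : ℝ) := by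
      push_cast [hτT]; ring
    rw [this]
  rw [h2, nsmul_eq_mul, Finset.card_range]

end ClosedForm

section Integral

variable {V : Type*} (G : SimpleGraph V) (s : ℕ → V) (Δ k A0 : ℕ) (v : V)

lemma AoIR_eq_on (u : ℕ) {x : ℝ} (hx : x ∈ Set.Ioo (u:ℝ) ((u:ℝ)+1)) :
    AoIR G s Δ k A0 v x = (AoI G s Δ k A0 v u : ℝ) + (x - u) := by
  have h0 : (0:ℝ) ≤ x := le_of_lt (lt_of_le_of_lt (Nat.cast_nonneg u) hx.1)
  have hfl : ⌊x⌋₊ = u := by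
    rw [Nat.floor_eq_iff h0]
    exact ⟨hx.1.le, hx.2⟩
  unfold AoIR
  rw [hfl]

lemma unit_integrable (u : ℕ) :
    IntervalIntegrable (AoIR G s Δ k A0 v) MeasureTheory.volume (u:ℝ) ((u:ℝ)+1) := by
  have hg : IntervalIntegrable (fun x => (AoI G s Δ k A0 v u : ℝ) + (x - (u:ℝ)))
      MeasureTheory.volume (u:ℝ) ((u:ℝ)+1) :=
    (continuous_const.add (continuous_id.sub continuous_const)).intervalIntegrable _ _
  apply hg.congr_ae
  rw [Set.uIoc_of_le (by linarith : (u:ℝ) ≤ (u:ℝ)+1)]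
  have h1 : MeasureTheory.volume.restrict (Set.Ioc (u:ℝ) ((u:ℝ)+1))
      = MeasureTheory.volume.restrict (Set.Ioo (u:ℝ) ((u:ℝ)+1)) :=
    (MeasureTheory.Measure.restrict_congr_set MeasureTheory.Ioo_ae_eq_Ioc).symm
  rw [h1]
  exact (MeasureTheory.ae_restrict_iff' measurableSet_Ioo).2
    (MeasureTheory.ae_of_all _ (fun x hx => (AoIR_eq_on G s Δ k A0 v u hx).symm))

lemma unit_integral (u : ℕ) :
    ∫ t in (u:ℝ)..((u:ℝ)+1), AoIR G s Δ k A0 v t = (AoI G s Δ k A0 v u : ℝ) + 1/2 := by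
  have hcongr : ∫ t in (u:ℝ)..((u:ℝ)+1), AoIR G s Δ k A0 v t
      = ∫ t in (u:ℝ)..((u:ℝ)+1), ((AoI G s Δ k A0 v u : ℝ) + (t - (u:ℝ))) := by
    apply intervalIntegral.integral_congr_ae
    have hne : ∀ᵐ (x:ℝ) ∂MeasureTheory.volume, x ≠ ((u:ℝ)+1) := by
      refine (MeasureTheory.ae_iff).2 ?_
      simp [Real.volume_singleton]
    filter_upwards [hne] with x hx hmem
    rw [Set.uIoc_of_le (by linarith : (u:ℝ) ≤ (u:ℝ)+1)] at hmem
    exact AoIR_eq_on G s Δ k A0 v u ⟨hmem.1, lt_of_le_of_ne hmem.2 hx⟩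
  rw [hcongr]
  have heq : ∀ t ∈ Set.uIcc (u:ℝ) ((u:ℝ)+1),
      (AoI G s Δ k A0 v u : ℝ) + (t - u) = ((AoI G s Δ k A0 v u : ℝ) - u) + t := by
    intro t _; ring
  rw [intervalIntegral.integral_congr heq,
    intervalIntegral.integral_add intervalIntegrable_const
      intervalIntegral.intervalIntegrable_id,
    intervalIntegral.integral_const, integral_id, smul_eq_mul]
  ring

lemma integrable_to (T : ℕ) :
    IntervalIntegrable (AoIR G s Δ k A0 v) MeasureTheory.volume 0 (T:ℝ) := by
  induction T with
  | zero => simp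
  | succ T ih =>
    have h : ((T+1:ℕ):ℝ) = (T:ℝ)+1 := by push_cast; ring
    rw [h]
    exact ih.trans (unit_integrable G s Δ k A0 v T)

lemma integral_eq_sum (T : ℕ) :
    ∫ t in (0:ℝ)..(T:ℝ), AoIR G s Δ k A0 v t
      = ∑ t ∈ Finset.range T, ((AoI G s Δ k A0 v t : ℝ) + 1/2) := by
  induction T with
  | zero => simp
  | succ T ih =>
    have h : ((T+1:ℕ):ℝ) = (T:ℝ)+1 := by push_cast; ring
    rw [h, ← intervalIntegral.integral_add_adjacent_intervals
      (integrable_to G s Δ k A0 v T) (unit_integrable G s Δ k A0 v T),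
      ih, unit_integral G s Δ k A0 v T, Finset.sum_range_succ]

end Integral

section Final

variable {V : Type*} (G : SimpleGraph V) (s : ℕ → V) (Δ k A0 : ℕ) (v : V)
variable (i : ℕ → ℕ) (kv : ℕ)

lemma gauss (n : ℕ) : 2 * ∑ t ∈ Finset.range n, (t:ℝ) = (n:ℝ)^2 - n := by
  induction n with
  | zero => simp
  | succ m ih =>
    rw [Finset.sum_range_succ, mul_add, ih]
    push_cast
    ring

lemma per_vertex (hΔ : 1 ≤ Δ) (hk : 1 ≤ k) (hA0 : 1 ≤ A0) (hi0 : i 0 = 1)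
    (hmono : StrictMonoOn i (Set.Icc 1 kv))
    (him : Dset G s Δ k v = (Finset.Icc 1 kv).image i) (T : ℕ)
    (hTb : tsel Δ (i kv) + G.dist (s (i kv)) v ≤ T) :
    2 * (∫ t in (0:ℝ)..(T:ℝ), AoIR G s Δ k A0 v t)
      = (2*(A0:ℝ) - 2*Δ*A0 + T^2 + 2*Δ*T + (Δ:ℝ)^2 - 2*Δ
          + 2*((Δ:ℝ) - T*Δ - (Δ:ℝ)^2)*k + (Δ:ℝ)^2*k^2)
        + (2*(A0:ℝ)*((Δ:ℝ)*(i 1) + G.dist (s (i 1)) v)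
          + 2*(Δ:ℝ)*∑ j ∈ Finset.Icc 1 kv,
              ((i j:ℝ) - (i (j-1):ℝ)) * G.dist (s (i j)) v
          + (Δ:ℝ)^2*∑ j ∈ Finset.Icc 1 kv, ((i j:ℝ) - (i (j-1):ℝ))^2) := by
  classical
  have hkv1 : 1 ≤ kv := kv_pos G s Δ k v i kv hk him
  have h1kv : (1:ℕ) ∈ Finset.Icc 1 kv := mem_Icc.2 ⟨le_rfl, hkv1⟩
  have hkvm : kv ∈ Finset.Icc 1 kv := mem_Icc.2 ⟨hkv1, le_rfl⟩
  have hTk : tau G s Δ v i kv ≤ T := hTb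
  -- cast of tau
  have hτR : ∀ j ∈ Finset.Icc 1 kv, (tau G s Δ v i j : ℝ)
      = (Δ:ℝ)*(i j : ℝ) - Δ + 1 + (G.dist (s (i j)) v : ℝ) := by
    intro j hj
    have hij1 : 1 ≤ i j := (mem_Icc.1 (i_mem_Icc G s Δ k v i kv him hj)).1
    rw [tau_def]
    unfold tsel
    push_cast [hij1]
    ring
  -- conversion Icc → range
  have hIR : ∀ (f : ℕ → ℝ), ∑ j ∈ Finset.Icc 1 kv, f j
      = ∑ j ∈ Finset.range kv, f (j+1) := by
    intro f
    rw [← Finset.Ico_add_one_right_eq_Icc, Finset.sum_Ico_eq_sum_range]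
    simp [add_comm]
  have htop : i kv = k := i_top G s Δ k v i kv hk hmono him
  -- telescoping sums
  have E1 : ∑ j ∈ Finset.Icc 1 kv, ((i j:ℝ) - (i (j-1):ℝ)) = (k:ℝ) - 1 := by
    rw [hIR]
    simp only [Nat.add_sub_cancel]
    rw [Finset.sum_range_sub (fun m => (i m : ℝ)), htop, hi0]
    norm_num
  have E2 : ∑ j ∈ Finset.Icc 1 kv,
      (2*(((i j:ℝ) - (i (j-1):ℝ)) * (i j:ℝ)) - ((i j:ℝ) - (i (j-1):ℝ))^2)
      = (k:ℝ)^2 - 1 := by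
    have hpt : ∀ j ∈ Finset.Icc 1 kv,
        (2*(((i j:ℝ) - (i (j-1):ℝ)) * (i j:ℝ)) - ((i j:ℝ) - (i (j-1):ℝ))^2)
        = ((i j:ℝ)^2 - (i (j-1):ℝ)^2) := fun j _ => by ring
    rw [Finset.sum_congr rfl hpt, hIR]
    simp only [Nat.add_sub_cancel]
    rw [Finset.sum_range_sub (fun m => (i m : ℝ)^2), htop, hi0]
    norm_num
  have E2' : ∑ j ∈ Finset.Icc 1 kv, (((i j:ℝ) - (i (j-1):ℝ)) * (i j:ℝ))
      = ((∑ j ∈ Finset.Icc 1 kv, ((i j:ℝ) - (i (j-1):ℝ))^2) + (k:ℝ)^2 - 1)/2 := by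
    rw [Finset.sum_sub_distrib, ← Finset.mul_sum] at E2
    linarith [E2]
  -- split the drop sum
  have hsplit : ∀ j ∈ Finset.Icc 1 kv,
      ((T:ℝ) - (tau G s Δ v i j : ℝ)) * drop Δ A0 i j
      = ((Δ:ℝ)*((T:ℝ)+(Δ:ℝ)-1)) * ((i j:ℝ) - (i (j-1):ℝ))
        - (Δ:ℝ)^2 * (((i j:ℝ) - (i (j-1):ℝ)) * (i j:ℝ))
        - (Δ:ℝ) * (((i j:ℝ) - (i (j-1):ℝ)) * (G.dist (s (i j)) v : ℝ))
        + (if j = 1 then (A0:ℝ) * ((T:ℝ) - (tau G s Δ v i 1 : ℝ)) else 0) := by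
    intro j hj
    unfold drop
    rw [hτR j hj]
    by_cases h : j = 1
    · subst h
      rw [if_pos rfl, if_pos rfl, hτR 1 h1kv]
      ring
    · rw [if_neg h, if_neg h]
      ring
  have hBig : ∑ j ∈ Finset.Icc 1 kv, ((T:ℝ) - (tau G s Δ v i j : ℝ)) * drop Δ A0 i j
      = ((Δ:ℝ)*((T:ℝ)+(Δ:ℝ)-1)) * ((k:ℝ) - 1)
        - (Δ:ℝ)^2 * (((∑ j ∈ Finset.Icc 1 kv, ((i j:ℝ) - (i (j-1):ℝ))^2) + (k:ℝ)^2 - 1)/2)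
        - (Δ:ℝ) * (∑ j ∈ Finset.Icc 1 kv,
            (((i j:ℝ) - (i (j-1):ℝ)) * (G.dist (s (i j)) v : ℝ)))
        + (A0:ℝ) * ((T:ℝ) - (tau G s Δ v i 1 : ℝ)) := by
    rw [Finset.sum_congr rfl hsplit, Finset.sum_add_distrib, Finset.sum_sub_distrib,
      Finset.sum_sub_distrib, ← Finset.mul_sum, ← Finset.mul_sum, ← Finset.mul_sum,
      E1, E2', Finset.sum_ite_eq' (Finset.Icc 1 kv) 1
        (fun _ => (A0:ℝ) * ((T:ℝ) - (tau G s Δ v i 1 : ℝ))), if_pos h1kv]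
  -- assemble
  rw [integral_eq_sum G s Δ k A0 v T, Finset.sum_add_distrib, Finset.sum_const,
    Finset.card_range, nsmul_eq_mul,
    sum_AoI G s Δ k A0 v i kv hΔ hk hA0 hi0 hmono him T hTk, hBig, hτR 1 h1kv]
  linear_combination gauss T

end Final

lemma final_helper {W : Type*} [Fintype W] (f C : W → ℝ) (K n T : ℝ)
    (hn : n ≠ 0) (hT : T ≠ 0) (hcard : ((Fintype.card W : ℕ):ℝ) = n)
    (hkey : ∀ w, f w = (K + C w)/2) :
    (1/(n*T)) * ∑ w : W, f w = (1/(2*T))*K + (1/(2*n*T)) * ∑ w : W, C w := by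
  rw [Finset.sum_congr rfl (fun w _ => hkey w)]
  have h1 : ∀ w ∈ (Finset.univ : Finset W), (K + C w)/2 = K/2 + C w/2 :=
    fun w _ => by ring
  have h2 : ∑ w : W, (K + C w)/2 = n*(K/2) + (∑ w : W, C w)/2 := by
    rw [Finset.sum_congr rfl h1, Finset.sum_add_distrib, Finset.sum_const,
      nsmul_eq_mul, ← Finset.sum_div, Finset.card_univ, hcard]
  rw [h2]
  field_simp

end Stmt6Aux

theorem stmt6 {V : Type*} [Fintype V] (G : SimpleGraph V) (hconn : G.Connected)
    (s : ℕ → V) (Δ k A0 T : ℕ) (hΔ : 1 ≤ Δ) (hk : 1 ≤ k) (hA0 : 1 ≤ A0)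
    (i : V → ℕ → ℕ) (kv : V → ℕ)
    (hkv : ∀ v, kv v = (Dset G s Δ k v).card)
    (hi0 : ∀ v, i v 0 = 1)
    (hmono : ∀ v, StrictMonoOn (i v) (Set.Icc 1 (kv v)))
    (him : ∀ v, Dset G s Δ k v = (Finset.Icc 1 (kv v)).image (i v))
    (hT : ∀ v, tsel Δ (i v (kv v)) + G.dist (s (i v (kv v))) v ≤ T) :
    (1 / ((Fintype.card V : ℝ) * T)) *
        ∑ v : V, ∫ t in (0:ℝ)..(T:ℝ), AoIR G s Δ k A0 v t
      = (1 / (2 * (T : ℝ))) *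
          (2 * (A0 : ℝ) - 2 * Δ * A0 + T ^ 2 + 2 * Δ * T + (Δ : ℝ) ^ 2 - 2 * Δ
            + 2 * ((Δ : ℝ) - T * Δ - (Δ : ℝ) ^ 2) * k + (Δ : ℝ) ^ 2 * k ^ 2)
        + (1 / (2 * (Fintype.card V : ℝ) * T)) *
          ∑ v : V,
            (2 * (A0 : ℝ) * ((Δ : ℝ) * (i v 1) + G.dist (s (i v 1)) v)
              + 2 * (Δ : ℝ) * ∑ j ∈ Finset.Icc 1 (kv v),
                  ((i v j : ℝ) - (i v (j - 1) : ℝ)) * G.dist (s (i v j)) v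
              + (Δ : ℝ) ^ 2 * ∑ j ∈ Finset.Icc 1 (kv v),
                  ((i v j : ℝ) - (i v (j - 1) : ℝ)) ^ 2) := by
  classical
  have hnV : Nonempty V := hconn.nonempty
  have hn : (0:ℝ) < (Fintype.card V : ℝ) := by exact_mod_cast Fintype.card_pos
  have hT1 : 1 ≤ T := by
    obtain ⟨v0⟩ := hnV
    exact le_trans (le_trans (Stmt6Aux.tsel_pos Δ _) (Nat.le_add_right _ _)) (hT v0)
  have hTpos : (0:ℝ) < T := by exact_mod_cast hT1
  have key : ∀ v : V, (∫ t in (0:ℝ)..(T:ℝ), AoIR G s Δ k A0 v t)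
      = ((2 * (A0 : ℝ) - 2 * Δ * A0 + T ^ 2 + 2 * Δ * T + (Δ : ℝ) ^ 2 - 2 * Δ
            + 2 * ((Δ : ℝ) - T * Δ - (Δ : ℝ) ^ 2) * k + (Δ : ℝ) ^ 2 * k ^ 2)
          + (2 * (A0 : ℝ) * ((Δ : ℝ) * (i v 1) + G.dist (s (i v 1)) v)
              + 2 * (Δ : ℝ) * ∑ j ∈ Finset.Icc 1 (kv v),
                  ((i v j : ℝ) - (i v (j - 1) : ℝ)) * G.dist (s (i v j)) v
              + (Δ : ℝ) ^ 2 * ∑ j ∈ Finset.Icc 1 (kv v),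
                  ((i v j : ℝ) - (i v (j - 1) : ℝ)) ^ 2))/2 := by
    intro v
    have h := Stmt6Aux.per_vertex G s Δ k A0 v (i v) (kv v) hΔ hk hA0 (hi0 v)
      (hmono v) (him v) T (hT v)
    linarith [h]
  exact Stmt6Aux.final_helper
    (fun v => ∫ t in (0:ℝ)..(T:ℝ), AoIR G s Δ k A0 v t)
    (fun v => (2 * (A0 : ℝ) * ((Δ : ℝ) * (i v 1) + G.dist (s (i v 1)) v)
              + 2 * (Δ : ℝ) * ∑ j ∈ Finset.Icc 1 (kv v),
                  ((i v j : ℝ) - (i v (j - 1) : ℝ)) * G.dist (s (i v j)) v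
              + (Δ : ℝ) ^ 2 * ∑ j ∈ Finset.Icc 1 (kv v),
                  ((i v j : ℝ) - (i v (j - 1) : ℝ)) ^ 2))
    (2 * (A0 : ℝ) - 2 * Δ * A0 + T ^ 2 + 2 * Δ * T + (Δ : ℝ) ^ 2 - 2 * Δ
            + 2 * ((Δ : ℝ) - T * Δ - (Δ : ℝ) ^ 2) * k + (Δ : ℝ) ^ 2 * k ^ 2)
    (Fintype.card V : ℝ) (T:ℝ) (ne_of_gt hn) (ne_of_gt hTpos) rfl key
end

section
/- For every vertex v, the weighted surviving-distance sum is dominated by the total seed-distance sum: Σ_{j=1}^{k_v} (i_j − i_{j−1}) · dist(s_{i_j}, v) ≤ Σ_{x=1}^{k} dist(s_x, v). More precisely, for each 1 ≤ j ≤ k_v one has (i_j − i_{j−1})·dist(s_{i_j}, v) ≤ Σ_{x = i_{j−1}+1}^{i_j} dist(s_x, v). -/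
open Finset

lemma mem_Dset_iff {V : Type*} (G : SimpleGraph V) (s : ℕ → V) (Δ k : ℕ) (v : V) {x : ℕ} :
    x ∈ Dset G s Δ k v ↔ x ∈ Finset.Icc 1 k ∧ ∀ y ∈ Finset.Icc 1 k, x < y →
      tsel Δ x + G.dist (s x) v < tsel Δ y + G.dist (s y) v := by
  classical
  simp [Dset]

lemma lemA {V : Type*} (G : SimpleGraph V) (s : ℕ → V) (Δ k : ℕ) (v : V) :
    ∀ x ∈ Finset.Icc 1 k, ∃ z ∈ Dset G s Δ k v, x ≤ z ∧
      tsel Δ z + G.dist (s z) v ≤ tsel Δ x + G.dist (s x) v := by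
  have key : ∀ n, ∀ x, x ∈ Finset.Icc 1 k → k - x ≤ n →
      ∃ z ∈ Dset G s Δ k v, x ≤ z ∧
        tsel Δ z + G.dist (s z) v ≤ tsel Δ x + G.dist (s x) v := by
    intro n
    induction n with
    | zero =>
      intro x hx h0
      refine ⟨x, ?_, le_refl _, le_refl _⟩
      rw [mem_Dset_iff]
      refine ⟨hx, fun y hy hxy => ?_⟩
      simp only [Finset.mem_Icc] at hx hy
      omega
    | succ n ih =>
      intro x hx hn
      by_cases hxD : x ∈ Dset G s Δ k v
      · exact ⟨x, hxD, le_refl _, le_refl _⟩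
      · have hex : ∃ y ∈ Finset.Icc 1 k, x < y ∧
            tsel Δ y + G.dist (s y) v ≤ tsel Δ x + G.dist (s x) v := by
          by_contra hcon
          push_neg at hcon
          exact hxD ((mem_Dset_iff G s Δ k v).mpr ⟨hx, fun y hy hxy => hcon y hy hxy⟩)
        obtain ⟨y, hy, hxy, hT⟩ := hex
        have hy' : k - y ≤ n := by
          simp only [Finset.mem_Icc] at hx hy
          omega
        obtain ⟨z, hzD, hyz, hTz⟩ := ih y hy hy'
        exact ⟨z, hzD, le_trans (le_of_lt hxy) hyz, le_trans hTz hT⟩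
  exact fun x hx => key (k - x) x hx (le_refl _)

theorem stmt8 {V : Type*} [Fintype V] (G : SimpleGraph V) (hconn : G.Connected)
    (s : ℕ → V) (Δ k : ℕ) (hΔ : 1 ≤ Δ) (hk : 1 ≤ k)
    (v : V) (i : ℕ → ℕ) (kv : ℕ) (hkv : kv = (Dset G s Δ k v).card)
    (hi0 : i 0 = 1)
    (hmono : StrictMonoOn i (Set.Icc 1 kv))
    (him : Dset G s Δ k v = (Finset.Icc 1 kv).image i) :
    (∀ j, 1 ≤ j → j ≤ kv →
      (i j - i (j - 1)) * G.dist (s (i j)) v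
        ≤ ∑ x ∈ Finset.Icc (i (j - 1) + 1) (i j), G.dist (s x) v) ∧
    ∑ j ∈ Finset.Icc 1 kv, (i j - i (j - 1)) * G.dist (s (i j)) v
      ≤ ∑ x ∈ Finset.Icc 1 k, G.dist (s x) v := by
  classical
  set d : ℕ → ℕ := fun x => G.dist (s x) v with hd
  -- i maps [1,kv] into Dset
  have hiD : ∀ j, 1 ≤ j → j ≤ kv → i j ∈ Dset G s Δ k v := by
    intro j h1 h2
    rw [him, Finset.mem_image]
    exact ⟨j, Finset.mem_Icc.mpr ⟨h1, h2⟩, rfl⟩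
  have hDk : ∀ x ∈ Dset G s Δ k v, 1 ≤ x ∧ x ≤ k := by
    intro x hx
    have := ((mem_Dset_iff G s Δ k v).mp hx).1
    simpa using Finset.mem_Icc.mp this
  have hmonole : ∀ a b, 1 ≤ a → a ≤ b → b ≤ kv → i a ≤ i b := by
    intro a b h1 hab h2
    rcases eq_or_lt_of_le hab with h | h
    · rw [h]
    · exact le_of_lt (hmono (Set.mem_Icc.mpr ⟨h1, le_trans hab h2⟩)
        (Set.mem_Icc.mpr ⟨le_trans h1 hab, h2⟩) h)
  have hiprev : ∀ j, 1 ≤ j → j ≤ kv → 1 ≤ i (j - 1) := by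
    intro j h1 h2
    rcases Nat.eq_or_lt_of_le h1 with h | h
    · rw [← h]; simp [hi0]
    · exact (hDk _ (hiD (j - 1) (by omega) (by omega))).1
  have hiprevle : ∀ j, 1 ≤ j → j ≤ kv → i (j - 1) ≤ i j := by
    intro j h1 h2
    rcases Nat.eq_or_lt_of_le h1 with h | h
    · rw [← h]; simp only [Nat.sub_self, hi0]
      exact (hDk _ (hiD 1 le_rfl (by omega))).1
    · exact hmonole (j - 1) j (by omega) (by omega) h2
  have htsel : ∀ a b : ℕ, a ≤ b → tsel Δ a ≤ tsel Δ b := by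
    intro a b hab
    unfold tsel
    exact Nat.add_le_add_right (Nat.mul_le_mul_right _ (Nat.sub_le_sub_right hab 1)) 1
  -- pointwise domination
  have hpt : ∀ j, 1 ≤ j → j ≤ kv →
      ∀ x ∈ Finset.Icc (i (j - 1) + 1) (i j), d (i j) ≤ d x := by
    intro j h1 h2 x hx
    simp only [Finset.mem_Icc] at hx
    have hijD := hiD j h1 h2
    have hijk := hDk _ hijD
    have hxk : x ∈ Finset.Icc 1 k := by
      have := hiprev j h1 h2
      exact Finset.mem_Icc.mpr ⟨by omega, le_trans hx.2 hijk.2⟩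
    obtain ⟨z, hzD, hxz, hTz⟩ := lemA G s Δ k v x hxk
    obtain ⟨m, hm, hmz⟩ := Finset.mem_image.mp (him ▸ hzD)
    simp only [Finset.mem_Icc] at hm
    -- m ≥ j
    have hjm : j ≤ m := by
      by_contra hcon
      push_neg at hcon
      have hm1 : m ≤ j - 1 := by omega
      have h1m : 1 ≤ j - 1 := by omega
      have : i m ≤ i (j - 1) := hmonole m (j - 1) hm.1 hm1 (by omega)
      omega
    have hijz : i j ≤ z := hmz ▸ hmonole j m h1 hjm hm.2
    have hTij : tsel Δ (i j) + G.dist (s (i j)) v ≤ tsel Δ x + G.dist (s x) v := by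
      rcases eq_or_lt_of_le hijz with h | h
      · rw [h]; exact hTz
      · have := ((mem_Dset_iff G s Δ k v).mp hijD).2 z
          ((mem_Dset_iff G s Δ k v).mp hzD).1 h
        omega
    have := htsel x (i j) hx.2
    show d (i j) ≤ d x
    simp only [hd]
    omega
  have part1 : ∀ j, 1 ≤ j → j ≤ kv →
      (i j - i (j - 1)) * d (i j)
        ≤ ∑ x ∈ Finset.Icc (i (j - 1) + 1) (i j), d x := by
    intro j h1 h2
    have hcard : (Finset.Icc (i (j - 1) + 1) (i j)).card = i j - i (j - 1) := by
      rw [Nat.card_Icc]; omega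
    calc (i j - i (j - 1)) * d (i j)
        = ∑ _x ∈ Finset.Icc (i (j - 1) + 1) (i j), d (i j) := by
          rw [Finset.sum_const, smul_eq_mul, hcard]
      _ ≤ ∑ x ∈ Finset.Icc (i (j - 1) + 1) (i j), d x :=
          Finset.sum_le_sum (fun x hx => hpt j h1 h2 x hx)
  refine ⟨part1, ?_⟩
  have step1 : ∑ j ∈ Finset.Icc 1 kv, (i j - i (j - 1)) * d (i j)
      ≤ ∑ j ∈ Finset.Icc 1 kv, ∑ x ∈ Finset.Icc (i (j - 1) + 1) (i j), d x :=
    Finset.sum_le_sum (fun j hj => by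
      have := Finset.mem_Icc.mp hj
      exact part1 j this.1 this.2)
  have hpair : ∀ a b : ℕ, 1 ≤ a → a ≤ kv → 1 ≤ b → b ≤ kv → a < b →
      Disjoint (Finset.Icc (i (a - 1) + 1) (i a)) (Finset.Icc (i (b - 1) + 1) (i b)) := by
    intro a b ha1 ha2 hb1 hb2 h
    have hkey : i a ≤ i (b - 1) := hmonole a (b - 1) ha1 (by omega) (by omega)
    rw [Finset.disjoint_left]
    intro x hx hx'
    simp only [Finset.mem_Icc] at hx hx'
    omega
  have hdisj : ((Finset.Icc 1 kv : Finset ℕ) : Set ℕ).PairwiseDisjoint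
      (fun j => Finset.Icc (i (j - 1) + 1) (i j)) := by
    intro a ha b hb hab
    simp only [Finset.coe_Icc, Set.mem_Icc] at ha hb
    rcases lt_or_gt_of_ne hab with h | h
    · exact hpair a b ha.1 ha.2 hb.1 hb.2 h
    · exact (hpair b a hb.1 hb.2 ha.1 ha.2 h).symm
  have step2 : ∑ j ∈ Finset.Icc 1 kv, ∑ x ∈ Finset.Icc (i (j - 1) + 1) (i j), d x
      = ∑ x ∈ (Finset.Icc 1 kv).biUnion (fun j => Finset.Icc (i (j - 1) + 1) (i j)), d x :=
    (Finset.sum_biUnion hdisj).symm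
  have step3 : (Finset.Icc 1 kv).biUnion (fun j => Finset.Icc (i (j - 1) + 1) (i j))
      ⊆ Finset.Icc 1 k := by
    intro x hx
    obtain ⟨j, hj, hxj⟩ := Finset.mem_biUnion.mp hx
    simp only [Finset.mem_Icc] at hj hxj
    have hik := (hDk _ (hiD j hj.1 hj.2)).2
    have := hiprev j hj.1 hj.2
    exact Finset.mem_Icc.mpr ⟨by omega, le_trans hxj.2 hik⟩
  calc ∑ j ∈ Finset.Icc 1 kv, (i j - i (j - 1)) * d (i j)
      ≤ ∑ j ∈ Finset.Icc 1 kv, ∑ x ∈ Finset.Icc (i (j - 1) + 1) (i j), d x := step1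
    _ = ∑ x ∈ (Finset.Icc 1 kv).biUnion (fun j => Finset.Icc (i (j - 1) + 1) (i j)), d x := step2
    _ ≤ ∑ x ∈ Finset.Icc 1 k, d x := Finset.sum_le_sum_of_subset step3
end

section
/- Let Δ ≥ 1 and D ≥ 1 be integers. Consider minimizing f(μ′, ς′) = 1 + (μ′ − 1)Δ + ς′ over integer pairs (μ′, ς′) with μ′ ≥ 1, 0 ≤ ς′ ≤ Δ − 1, and μ′ + Δ(μ′ − 1)μ′ + 2ς′μ′ ≥ D + 1. Define μ = ⌊ (Δ − 1 + √(Δ² + 2Δ + 4DΔ + 1)) / (2Δ) ⌋ and ς̄ = ⌈ (D + 1 − (μ²Δ − μΔ + μ)) / (2μ) ⌉. Then μ ≥ 1, 0 ≤ ς̄ ≤ Δ, the minimum value of f over the feasible set equals 1 + (μ − 1)Δ + ς̄, and whenever ς̄ < Δ the pair (μ, ς̄) is feasible and attains this minimum. -/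
/-!
Write `g m = coverage Δ m 0 = Δ m² - (Δ - 1) m`, so that `coverage Δ m s = g m + 2 s m`.
Since `g (m + 1) = g m + 2 Δ m + 1`, the map `g` is increasing, and `μ` (the floor of the positive
root of `Δ x² - (Δ - 1) x = D + 1`) is the largest `m` with `g m ≤ D + 1`, while `ς̄` is the least
offset `s` with `D + 1 ≤ g μ + 2 s μ`; the identity for `g (μ + 1)` forces `0 ≤ ς̄ ≤ Δ`.
Fewer than `μ` seeds never suffice, as even the largest admissible offset gives
`coverage Δ m (Δ - 1) < g (m + 1) ≤ g μ`; with `μ` seeds the least offset is `ς̄`; and every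
additional seed costs `Δ ≥ ς̄`. When `ς̄ = Δ` the optimum is attained by `(μ + 1, 0)` instead.
-/

namespace CyclicSeeding

/-- Number of nodes of the diameter path updated by `m` seeds with extra offset `s`. -/
def coverage (Δ m : ℕ) (s : ℤ) : ℤ := m + Δ * ((m : ℤ) - 1) * m + 2 * s * m

def seedingTime (Δ m : ℕ) (s : ℤ) : ℤ := 1 + ((m : ℤ) - 1) * Δ + s

def feasibleSeedingTimes (Δ D : ℕ) : Set ℤ :=
  {y | ∃ m s : ℕ, 1 ≤ m ∧ (s : ℤ) ≤ Δ - 1 ∧ (D : ℤ) + 1 ≤ coverage Δ m s ∧ y = seedingTime Δ m s}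

theorem coverage_eq (Δ m : ℕ) (s : ℤ) : coverage Δ m s = coverage Δ m 0 + 2 * s * m := by
  unfold coverage; ring

theorem coverage_succ_zero (Δ m : ℕ) :
    coverage Δ (m + 1) 0 = coverage Δ m 0 + 2 * Δ * m + 1 := by
  unfold coverage; push_cast; ring

theorem coverage_zero_monotone (Δ : ℕ) : Monotone fun m ↦ coverage Δ m 0 :=
  monotone_nat_of_le_succ fun m ↦ by
    rw [coverage_succ_zero]; linarith [show (0 : ℤ) ≤ 2 * Δ * m by positivity]

theorem coverage_lt_coverage_succ_zero {Δ m : ℕ} {s : ℤ} (hs : s ≤ Δ - 1) :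
    coverage Δ m s < coverage Δ (m + 1) 0 := by
  have : 2 * s * m ≤ 2 * ((Δ : ℤ) - 1) * m := by gcongr
  rw [coverage_eq, coverage_succ_zero]
  linarith

/-- `g m ≤ D + 1` exactly below the positive root of `Δ x² - (Δ - 1) x - (D + 1)`. -/
theorem coverage_zero_le_iff {Δ : ℕ} (hΔ : 1 ≤ Δ) (D m : ℕ) :
    coverage Δ m 0 ≤ (D : ℤ) + 1 ↔
      (m : ℝ) ≤ ((Δ : ℝ) - 1 + √((Δ : ℝ) ^ 2 + 2 * Δ + 4 * D * Δ + 1)) / (2 * Δ) := by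
  have hΔ' : (1 : ℝ) ≤ Δ := by exact_mod_cast hΔ
  set c : ℝ := (Δ : ℝ) ^ 2 + 2 * Δ + 4 * D * Δ + 1
  have hc : √c ^ 2 = c := Real.sq_sqrt (by positivity)
  have hΔc : (Δ : ℝ) - 1 ≤ √c := (Real.le_sqrt (by linarith) (by positivity)).2 (by simp only [c]; nlinarith)
  -- completing the square: `c - (2 Δ m - (Δ - 1))² = 4 Δ (D + 1 - g m)`
  have hsq : c - (2 * Δ * m - ((Δ : ℝ) - 1)) ^ 2 = 4 * Δ * ((D + 1 : ℝ) - coverage Δ m 0) := by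
    simp only [coverage, c]; push_cast; ring
  rw [le_div_iff₀ (by positivity), ← sub_nonneg, ← @Int.cast_le ℝ, ← sub_nonneg]
  push_cast
  constructor
  · intro h
    have := Real.abs_le_sqrt (x := 2 * Δ * m - ((Δ : ℝ) - 1)) (y := c) (by nlinarith)
    linarith [le_abs_self (2 * Δ * m - ((Δ : ℝ) - 1))]
  · intro h
    have : (2 * Δ * m - ((Δ : ℝ) - 1)) ^ 2 ≤ √c ^ 2 := sq_le_sq'
      (by linarith [show (0 : ℝ) ≤ 2 * Δ * m by positivity]) (by linarith)
    nlinarith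

theorem le_floor_root_iff {Δ : ℕ} (hΔ : 1 ≤ Δ) (D m : ℕ) :
    m ≤ ⌊((Δ : ℝ) - 1 + √((Δ : ℝ) ^ 2 + 2 * Δ + 4 * D * Δ + 1)) / (2 * Δ)⌋₊ ↔
      coverage Δ m 0 ≤ (D : ℤ) + 1 := by
  have hroot := (coverage_zero_le_iff hΔ D 0).1 (by simp only [coverage]; push_cast; linarith)
  rw [Nat.le_floor_iff (by simpa using hroot), coverage_zero_le_iff hΔ]

theorem ceil_le_iff_le_coverage {Δ μ : ℕ} (hμ : 1 ≤ μ) (D : ℕ) (s : ℤ) :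
    ⌈((D : ℝ) + 1 - ((μ : ℝ) ^ 2 * Δ - μ * Δ + μ)) / (2 * μ)⌉ ≤ s ↔
      (D : ℤ) + 1 ≤ coverage Δ μ s := by
  have : (0 : ℝ) < 2 * μ := by positivity
  rw [Int.ceil_le, div_le_iff₀ this, ← @Int.cast_le ℝ]
  simp only [coverage]
  push_cast
  constructor <;> intro h <;> linarith

section Optimality

variable {Δ D μ : ℕ} {ς : ℤ}

theorem one_le_of_forall_le_iff (hμ : ∀ m, m ≤ μ ↔ coverage Δ m 0 ≤ (D : ℤ) + 1) : 1 ≤ μ :=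
  (hμ 1).2 (by simp only [coverage]; push_cast; linarith)

theorem lt_coverage_succ_zero (hμ : ∀ m, m ≤ μ ↔ coverage Δ m 0 ≤ (D : ℤ) + 1) :
    (D : ℤ) + 1 < coverage Δ (μ + 1) 0 :=
  not_le.1 fun h ↦ (hμ (μ + 1)).2 h |>.not_gt (Nat.lt_succ_self μ)

theorem nonneg_of_forall_le_iff (hμ : ∀ m, m ≤ μ ↔ coverage Δ m 0 ≤ (D : ℤ) + 1)
    (hς : ∀ s, ς ≤ s ↔ (D : ℤ) + 1 ≤ coverage Δ μ s) : 0 ≤ ς := by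
  by_contra! hneg
  have hcov := (hς (-1)).1 (by omega)
  have hμD := (hμ μ).1 le_rfl
  have hμ1 : (1 : ℤ) ≤ μ := by exact_mod_cast one_le_of_forall_le_iff hμ
  rw [coverage_eq] at hcov
  linarith

theorem le_of_forall_le_iff (hμ : ∀ m, m ≤ μ ↔ coverage Δ m 0 ≤ (D : ℤ) + 1)
    (hς : ∀ s, ς ≤ s ↔ (D : ℤ) + 1 ≤ coverage Δ μ s) : ς ≤ Δ := by
  have := lt_coverage_succ_zero hμ
  rw [coverage_succ_zero] at this
  exact (hς Δ).2 (by rw [coverage_eq]; linarith)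

theorem seedingTime_mem_feasibleSeedingTimes (hΔ : 1 ≤ Δ)
    (hμ : ∀ m, m ≤ μ ↔ coverage Δ m 0 ≤ (D : ℤ) + 1)
    (hς : ∀ s, ς ≤ s ↔ (D : ℤ) + 1 ≤ coverage Δ μ s) :
    seedingTime Δ μ ς ∈ feasibleSeedingTimes Δ D := by
  have hμ1 := one_le_of_forall_le_iff hμ
  have hς0 := nonneg_of_forall_le_iff hμ hς
  rcases (le_of_forall_le_iff hμ hς).lt_or_eq with hlt | rfl
  · refine ⟨μ, ς.toNat, hμ1, by omega, ?_, ?_⟩ <;> rw [Int.toNat_of_nonneg hς0]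
    exact (hς ς).1 le_rfl
  · refine ⟨μ + 1, 0, by omega, by omega, by simpa using (lt_coverage_succ_zero hμ).le, ?_⟩
    simp only [seedingTime]; push_cast; ring

theorem seedingTime_le_of_mem_feasibleSeedingTimes
    (hμ : ∀ m, m ≤ μ ↔ coverage Δ m 0 ≤ (D : ℤ) + 1)
    (hς : ∀ s, ς ≤ s ↔ (D : ℤ) + 1 ≤ coverage Δ μ s) {y : ℤ}
    (hy : y ∈ feasibleSeedingTimes Δ D) : seedingTime Δ μ ς ≤ y := by
  obtain ⟨m, s, -, hs, hcov, rfl⟩ := hy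
  rcases lt_trichotomy m μ with hlt | rfl | hgt
  · have := (coverage_lt_coverage_succ_zero hs).trans_le (coverage_zero_monotone Δ hlt)
    linarith [(hμ μ).1 le_rfl]
  · simp only [seedingTime]
    linarith [(hς s).2 hcov]
  · have hςΔ := le_of_forall_le_iff hμ hς
    have : (μ : ℤ) * Δ ≤ ((m : ℤ) - 1) * Δ := by gcongr; omega
    simp only [seedingTime]
    linarith [Int.natCast_nonneg s]

theorem isLeast_seedingTime (hΔ : 1 ≤ Δ)
    (hμ : ∀ m, m ≤ μ ↔ coverage Δ m 0 ≤ (D : ℤ) + 1)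
    (hς : ∀ s, ς ≤ s ↔ (D : ℤ) + 1 ≤ coverage Δ μ s) :
    IsLeast (feasibleSeedingTimes Δ D) (seedingTime Δ μ ς) :=
  ⟨seedingTime_mem_feasibleSeedingTimes hΔ hμ hς,
    fun _ ↦ seedingTime_le_of_mem_feasibleSeedingTimes hμ hς⟩

end Optimality

end CyclicSeeding

open CyclicSeeding in
theorem stmt14_general (Δ D : ℕ) (hΔ : 1 ≤ Δ)
    (μ : ℕ)
    (hμdef : μ = ⌊((Δ : ℝ) - 1 + Real.sqrt ((Δ : ℝ) ^ 2 + 2 * Δ + 4 * D * Δ + 1))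
        / (2 * Δ)⌋₊)
    (ς : ℤ)
    (hςdef : ς = ⌈(((D : ℝ) + 1 - ((μ : ℝ) ^ 2 * Δ - μ * Δ + μ)) / (2 * μ))⌉) :
    1 ≤ μ ∧ 0 ≤ ς ∧ ς ≤ (Δ : ℤ) ∧
    IsLeast {y : ℤ | ∃ μ' ς' : ℕ, 1 ≤ μ' ∧ (ς' : ℤ) ≤ (Δ : ℤ) - 1 ∧
        (D : ℤ) + 1 ≤ (μ' : ℤ) + Δ * ((μ' : ℤ) - 1) * μ' + 2 * ς' * μ' ∧
        y = 1 + ((μ' : ℤ) - 1) * Δ + ς'}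
      (1 + ((μ : ℤ) - 1) * Δ + ς) ∧
    (ς < (Δ : ℤ) →
      (D : ℤ) + 1 ≤ (μ : ℤ) + Δ * ((μ : ℤ) - 1) * μ + 2 * ς * μ) := by
  have hμ : ∀ m, m ≤ μ ↔ coverage Δ m 0 ≤ (D : ℤ) + 1 := hμdef ▸ le_floor_root_iff hΔ D
  have hμ1 := one_le_of_forall_le_iff hμ
  have hς : ∀ s, ς ≤ s ↔ (D : ℤ) + 1 ≤ coverage Δ μ s :=
    hςdef ▸ ceil_le_iff_le_coverage hμ1 D
  exact ⟨hμ1, nonneg_of_forall_le_iff hμ hς, le_of_forall_le_iff hμ hς,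
    isLeast_seedingTime hΔ hμ hς, fun _ ↦ (hς ς).1 le_rfl⟩

theorem stmt14 (Δ D : ℕ) (hΔ : 1 ≤ Δ) (hD : 1 ≤ D)
    (μ : ℕ)
    (hμdef : μ = ⌊((Δ : ℝ) - 1 + Real.sqrt ((Δ : ℝ) ^ 2 + 2 * Δ + 4 * D * Δ + 1))
        / (2 * Δ)⌋₊)
    (ς : ℤ)
    (hςdef : ς = ⌈(((D : ℝ) + 1 - ((μ : ℝ) ^ 2 * Δ - μ * Δ + μ)) / (2 * μ))⌉) :
    1 ≤ μ ∧ 0 ≤ ς ∧ ς ≤ (Δ : ℤ) ∧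
    IsLeast {y : ℤ | ∃ μ' ς' : ℕ, 1 ≤ μ' ∧ (ς' : ℤ) ≤ (Δ : ℤ) - 1 ∧
        (D : ℤ) + 1 ≤ (μ' : ℤ) + Δ * ((μ' : ℤ) - 1) * μ' + 2 * ς' * μ' ∧
        y = 1 + ((μ' : ℤ) - 1) * Δ + ς'}
      (1 + ((μ : ℤ) - 1) * Δ + ς) ∧
    (ς < (Δ : ℤ) →
      (D : ℤ) + 1 ≤ (μ : ℤ) + Δ * ((μ : ℤ) - 1) * μ + 2 * ς * μ) :=
  stmt14_general Δ D hΔ μ hμdef ς hςdef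
end

section
/- Consider the AoI process in which all k seeds are selected simultaneously at time 1 (t_j = 1 for every j ∈ {1,…,k}; the Δ → 0 regime of the NP-hardness reduction). Let T ≥ 1 + max_{v ∈ V} min_{x ∈ {1,…,k}} dist(s_x, v) be an integer and assume A₀ ≥ T. Then the peak AoI satisfies sup_{v ∈ V} sup_{t ∈ [0,T]} A(v,t) = A₀ + 1 + max_{v ∈ V} min_{x ∈ {1,…,k}} dist(s_x, v). -/
open Finset

/-! If `d` is the distance from `v` to its nearest seed, the age at `v` grows from `A₀` to
`A₀ + d`, drops to `d + 1` at time `d + 1` (this needs `A₀ ≥ 1`) and equals the time afterwards.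
Up to time `T ≤ A₀` the integer-time age therefore never exceeds `A₀ + M`, while at a vertex
farthest from the seeds it equals `A₀ + M` at time `M < T`; the interpolated age then sweeps out
`[A₀ + M, A₀ + M + 1)`, whose supremum is `A₀ + M + 1`. -/

section

variable {V : Type*} (G : SimpleGraph V) (s : ℕ → V) {Δ k A0 : ℕ} {v : V}

theorem AoIR_natCast_add (n : ℕ) {r : ℝ} (hr0 : 0 ≤ r) (hr1 : r < 1) :
    AoIR G s Δ k A0 v (n + r) = AoI G s Δ k A0 v n + r := by
  have hfloor : ⌊(n : ℝ) + r⌋₊ = n := by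
    rw [Nat.floor_eq_iff (by positivity)]
    constructor <;> linarith
  rw [AoIR, hfloor]
  ring

theorem AoIR_le_AoI_floor_add_one (t : ℝ) :
    AoIR G s Δ k A0 v t ≤ AoI G s Δ k A0 v ⌊t⌋₊ + 1 := by
  have := Nat.lt_floor_add_one t
  rw [AoIR]
  linarith

theorem AoI_zero_succ (n : ℕ) :
    AoI G s 0 k A0 v (n + 1) =
      if (∃ j ∈ Icc 1 k, G.dist (s j) v = n) ∧ n < AoI G s 0 k A0 v n then n + 1
      else AoI G s 0 k A0 v n + 1 := by
  rw [AoI]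
  simp only [tsel, mul_zero, zero_add]
  split_ifs with hΩ hreset hreset
  · rw [inf'_congr hΩ rfl (g := fun _ => n + 1), inf'_const]
    intro j hj
    simp only [mem_filter] at hj
    omega
  · obtain ⟨j, hj⟩ := hΩ
    simp only [mem_filter] at hj
    exact absurd ⟨⟨j, hj.1, by omega⟩, by omega⟩ hreset
  · obtain ⟨⟨j, hj, hjn⟩, hlt⟩ := hreset
    exact absurd ⟨j, mem_filter.mpr ⟨hj, by omega, by omega⟩⟩ hΩ
  · rfl

theorem AoI_zero_eq (hA0 : 1 ≤ A0) {d : ℕ} (hmin : ∀ j ∈ Icc 1 k, d ≤ G.dist (s j) v)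
    (hd : ∃ j ∈ Icc 1 k, G.dist (s j) v = d) (n : ℕ) :
    AoI G s 0 k A0 v n = if n ≤ d then A0 + n else n := by
  induction n with
  | zero => simp [AoI]
  | succ n ih =>
    rw [AoI_zero_succ, ih]
    rcases lt_trichotomy n d with hlt | rfl | hgt
    · have hno : ¬ ∃ j ∈ Icc 1 k, G.dist (s j) v = n := fun ⟨j, hj, hjn⟩ => by
        have := hmin j hj; omega
      rw [if_neg (fun h => hno h.1), if_pos hlt.le, if_pos (Nat.succ_le_of_lt hlt)]
      omega
    · rw [if_pos le_rfl, if_pos ⟨hd, by omega⟩, if_neg (by omega)]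
    · rw [if_neg hgt.not_ge, if_neg (fun h => h.2.false), if_neg (by omega)]

theorem AoI_zero_le (hA0 : 1 ≤ A0) {d : ℕ} (hmin : ∀ j ∈ Icc 1 k, d ≤ G.dist (s j) v)
    (hd : ∃ j ∈ Icc 1 k, G.dist (s j) v = d) {n : ℕ} (hn : n ≤ A0) :
    AoI G s 0 k A0 v n ≤ A0 + d := by
  rw [AoI_zero_eq G s hA0 hmin hd]
  split_ifs <;> omega

end

theorem csSup_eq_of_Ico_subset_of_subset_Iic {α : Type*} [ConditionallyCompleteLinearOrder α]
    [DenselyOrdered α] {S : Set α} {a b : α} (hab : a < b) (hIco : Set.Ico a b ⊆ S)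
    (hIic : S ⊆ Set.Iic b) : sSup S = b :=
  le_antisymm (csSup_le ((Set.nonempty_Ico.mpr hab).mono hIco) hIic)
    (csSup_Ico hab ▸ csSup_le_csSup ⟨b, hIic⟩ (Set.nonempty_Ico.mpr hab) hIco)

theorem stmt15_general {V : Type*} [Fintype V] (G : SimpleGraph V)
    (s : ℕ → V) (k A0 T : ℕ) (hk : 1 ≤ k) (hA0 : 1 ≤ A0)
    (M : ℕ)
    (hM : M = Finset.univ.sup (fun v : V =>
      (Finset.Icc 1 k).inf' (Finset.nonempty_Icc.mpr hk) (fun x => G.dist (s x) v)))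
    (hT : 1 + M ≤ T) (hA0T : T ≤ A0) :
    sSup {x : ℝ | ∃ v : V, ∃ t : ℝ, 0 ≤ t ∧ t ≤ (T : ℝ) ∧ x = AoIR G s 0 k A0 v t}
      = (A0 : ℝ) + 1 + M := by
  set d : V → ℕ := fun v => (Icc 1 k).inf' (nonempty_Icc.mpr hk) (fun x => G.dist (s x) v)
  have hmin (v : V) : ∀ j ∈ Icc 1 k, d v ≤ G.dist (s j) v := fun j hj => inf'_le _ hj
  have hd (v : V) : ∃ j ∈ Icc 1 k, G.dist (s j) v = d v :=
    (exists_mem_eq_inf' (nonempty_Icc.mpr hk) _).imp fun _ ⟨hj, h⟩ => ⟨hj, h.symm⟩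
  obtain ⟨v₀, -, hv₀⟩ := exists_mem_eq_sup univ ⟨s 0, mem_univ _⟩ d
  have hTR : (M : ℝ) + 1 ≤ T := by exact_mod_cast (by omega : M + 1 ≤ T)
  rw [add_right_comm]
  refine csSup_eq_of_Ico_subset_of_subset_Iic (a := (A0 : ℝ) + M) (by linarith) ?_ ?_
  · rintro x ⟨hx0, hx1⟩
    refine ⟨v₀, M + (x - (A0 + M)), by linarith, by linarith, ?_⟩
    rw [AoIR_natCast_add G s M (by linarith) (by linarith),
      AoI_zero_eq G s hA0 (hmin v₀) (hd v₀), if_pos (hM.trans hv₀).le]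
    push_cast
    ring
  · rintro x ⟨v, t, -, htT, rfl⟩
    have hfloor : ⌊t⌋₊ ≤ A0 := Nat.floor_le_of_le (htT.trans (by exact_mod_cast hA0T))
    have hdM : d v ≤ M := hM ▸ le_sup (mem_univ v)
    have hAoI : AoI G s 0 k A0 v ⌊t⌋₊ ≤ A0 + M :=
      (AoI_zero_le G s hA0 (hmin v) (hd v) hfloor).trans (by omega)
    refine (AoIR_le_AoI_floor_add_one G s t).trans ?_
    exact_mod_cast Nat.add_le_add_right hAoI 1

theorem stmt15 {V : Type*} [Fintype V] (G : SimpleGraph V) (hconn : G.Connected)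
    (s : ℕ → V) (k A0 T : ℕ) (hk : 1 ≤ k) (hA0 : 1 ≤ A0)
    (M : ℕ)
    (hM : M = Finset.univ.sup (fun v : V =>
      (Finset.Icc 1 k).inf' (Finset.nonempty_Icc.mpr hk) (fun x => G.dist (s x) v)))
    (hT : 1 + M ≤ T) (hA0T : T ≤ A0) :
    sSup {x : ℝ | ∃ v : V, ∃ t : ℝ, 0 ≤ t ∧ t ≤ (T : ℝ) ∧ x = AoIR G s 0 k A0 v t}
      = (A0 : ℝ) + 1 + M :=
  stmt15_general G s k A0 T hk hA0 M hM hT hA0T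
end
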